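/- arXiv:1203.3157 — 5 statements merged into one kernel-verified Lean document; each statement's English description precedes it below -/
import Mathlib

section
/- Define m_π(q) = ∏_{b∈π} m_{|b|}(q) where m_{2n}(q) = Σ_{σ∈M(2n)} q^{cro(σ)} and m_{odd} = 0. Then for any set partition π of {1,...,2n}, m_π(q) = Σ_{σ∈M(2n), σ≤π} q^{cro(σ,π)}. -/
open Finset

noncomputable section
open scoped Classical

/-- Set partitions of a finite type, as finpartitions of `Finset.univ`. -/
abbrev SetPart (β : Type) [Fintype β] [DecidableEq β] := Finpartition (Finset.univ : Finset β)

instance finpartitionFintype {β : Type} [Fintype β] [DecidableEq β] (s : Finset β) :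
    Fintype (Finpartition s) :=
  Fintype.ofInjective Finpartition.parts fun a b h => by cases a; cases b; cases h; rfl

/-- The one-block partition `1̂`, the maximal element of the partition lattice. -/
def onePart (β : Type) [Fintype β] [DecidableEq β] : SetPart β :=
  Finpartition.ofErase {Finset.univ} (Finset.supIndep_singleton _ _) Finset.sup_singleton

/-- The Möbius function of a finite poset, via Philip Hall's theorem:
`μ(a,b) = ∑ₖ (-1)^k · #{chains a = x₀ < x₁ < ⋯ < x_k = b}`. -/
def mob {α : Type} [Fintype α] [PartialOrder α] (a b : α) : ℤ :=
  ∑ k ∈ Finset.range (Fintype.card α + 1), (-1) ^ k *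
    ((Finset.univ : Finset (Fin (k + 1) → α)).filter
      (fun c => c 0 = a ∧ c (Fin.last k) = b ∧ ∀ i : Fin k, c i.castSucc < c i.succ)).card

/-- Two blocks `b`, `c` cross: there are `i < k < j < l` with `i, j ∈ b` and `k, l ∈ c`. -/
def Crosses {α : Type} [LinearOrder α] [DecidableEq α] (b c : Finset α) : Prop :=
  ∃ i ∈ b, ∃ j ∈ b, ∃ k ∈ c, ∃ l ∈ c, i < k ∧ k < j ∧ j < l

/-- Number of crossings among a collection of blocks (for a matching, each crossing
is counted exactly once, since exactly one of the two orders crosses). -/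
def croPairs {α : Type} [LinearOrder α] [DecidableEq α] (P : Finset (Finset α)) : ℕ :=
  ((P ×ˢ P).filter fun p => Crosses p.1 p.2).card

/-- A matching: a set partition all of whose blocks have size `2`. -/
def IsMatching {β : Type} [DecidableEq β] {s : Finset β} (σ : Finpartition s) : Prop :=
  ∀ b ∈ σ.parts, b.card = 2

/-- Number of crossings of `σ`. -/
def cro {β : Type} [LinearOrder β] [DecidableEq β] {s : Finset β} (σ : Finpartition s) : ℕ :=
  croPairs σ.parts

/-- `cro(σ,π)`: the number of crossings of `σ` whose four points lie in one block of `π`. -/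
def cro2 {β : Type} [LinearOrder β] [Fintype β] [DecidableEq β] (σ π : SetPart β) : ℕ :=
  ((σ.parts ×ˢ σ.parts).filter fun p =>
    Crosses p.1 p.2 ∧ ∃ B ∈ π.parts, p.1 ∪ p.2 ⊆ B).card

/-- `P` is (the set of blocks of) a matching of the finite set `b`. -/
def IsMatchingOn {β : Type} [DecidableEq β] (P : Finset (Finset β)) (b : Finset β) : Prop :=
  (∀ c ∈ P, c.card = 2) ∧ (P : Set (Finset β)).PairwiseDisjoint id ∧ P.sup id = b

/-- Matching generating polynomial of a finite set `s`, by number of crossings. -/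
def mGen {β : Type} [LinearOrder β] [Fintype β] [DecidableEq β] (s : Finset β) : Polynomial ℤ :=
  ∑ σ ∈ (Finset.univ : Finset (Finpartition s)).filter (fun σ => IsMatching σ),
    Polynomial.X ^ cro σ

/-- The moment `m_k(q)` of the `q`-semicircular law: number of matchings of `{1, …, k}`
counted by crossings (zero for `k` odd). -/
def mNat (k : ℕ) : Polynomial ℤ := mGen (Finset.univ : Finset (Fin k))

/-- `I` is an interval. -/
def IsInterval {β : Type} [LinearOrder β] (I : Finset β) : Prop :=
  ∀ a ∈ I, ∀ b ∈ I, ∀ c, a ≤ c → c ≤ b → c ∈ I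

/-- A connected set partition: no proper nonempty interval is a union of blocks. -/
def IsConnectedP {β : Type} [LinearOrder β] [Fintype β] [DecidableEq β] (π : SetPart β) : Prop :=
  ∀ I : Finset β, I.Nonempty → I ≠ Finset.univ → IsInterval I →
    ¬ (∀ b ∈ π.parts, b ⊆ I ∨ Disjoint b I)

/-- The crossing graph of a set partition: vertices are the blocks,
edges are the crossing pairs of blocks. -/
def crossGraph {β : Type} [LinearOrder β] [DecidableEq β] {s : Finset β} (σ : Finpartition s) :
    SimpleGraph {b // b ∈ σ.parts} where
  Adj b c := b ≠ c ∧ (Crosses b.1 c.1 ∨ Crosses c.1 b.1)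
  symm := ⟨fun _ _ h => ⟨h.1.symm, h.2.symm⟩⟩
  loopless := ⟨fun _ h => h.1 rfl⟩

/-- The Tutte polynomial of a simple graph, evaluated at `(x, y)`, via the
Whitney rank sum `T_G(x,y) = ∑_{A ⊆ E} (x-1)^(r(E) - r(A)) (y-1)^(|A| - r(A))`
where `r(A) = |V| - #components of (V, A)`. -/
def tutteG {V : Type} [Fintype V] {R : Type} [CommRing R] (G : SimpleGraph V) (x y : R) : R :=
  letI : Fintype G.edgeSet := Fintype.ofFinite _
  let rk : Finset (Sym2 V) → ℕ := fun A =>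
    Fintype.card V - Nat.card (SimpleGraph.fromEdgeSet (↑A : Set (Sym2 V))).ConnectedComponent
  ∑ A ∈ G.edgeSet.toFinset.powerset,
    (x - 1) ^ (rk G.edgeSet.toFinset - rk A) * (y - 1) ^ (A.card - rk A)

/-- The simple graph underlying the edge subset `A` of a multigraph with
edge-endpoint map `ends`. -/
def mgSimple {V E : Type} (ends : E → Sym2 V) (A : Set E) : SimpleGraph V :=
  SimpleGraph.fromEdgeSet (ends '' A)

/-- Rank of an edge subset of a multigraph. -/
def mgRank {V E : Type} [Fintype V] (ends : E → Sym2 V) (A : Set E) : ℕ :=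
  Fintype.card V - Nat.card (mgSimple ends A).ConnectedComponent

/-- The Tutte polynomial of a multigraph (possibly with loops and multiple edges),
via the Whitney rank sum. -/
def tutteM {V E : Type} [Fintype V] [Fintype E] {R : Type} [CommRing R]
    (ends : E → Sym2 V) (x y : R) : R :=
  ∑ A ∈ (Finset.univ : Finset E).powerset,
    (x - 1) ^ (mgRank ends Set.univ - mgRank ends ↑A) * (y - 1) ^ (A.card - mgRank ends ↑A)

/-- `i(E,π)`: the number of edges both of whose endpoints lie in the same block of `π`. -/
def iE {V E : Type} [Fintype V] [DecidableEq V] [Fintype E] (ends : E → Sym2 V) (π : SetPart V) : ℕ :=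
  (Finset.univ.filter fun e : E => ∃ b ∈ π.parts, ∀ v ∈ ends e, v ∈ b).card

/-- `U_G(q) = (q-1)^{-(n-1)} ∑_{π ∈ P(V)} q^{i(E,π)} μ(π, 1̂)`. -/
def Ugraph {V E : Type} [Fintype V] [DecidableEq V] [Fintype E] (ends : E → Sym2 V) (q : ℚ) : ℚ :=
  ((q - 1) ^ (Fintype.card V - 1))⁻¹ *
    ∑ π : SetPart V, q ^ (iE ends π) * (mob π (onePart V) : ℚ)

/-- `D` is an orientation of the simple graph `G`. -/
def IsOrientation {V : Type} (G : SimpleGraph V) (D : V → V → Prop) : Prop :=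
  (∀ a b, D a b → G.Adj a b) ∧ ∀ a b, G.Adj a b → (D a b ↔ ¬ D b a)

/-- An orientation (directed relation) is acyclic. -/
def DAcyclic {V : Type} (D : V → V → Prop) : Prop := ∀ a, ¬ Relation.TransGen D a a

/-- `v` is a source: no incoming edges. -/
def IsSource {V : Type} (D : V → V → Prop) (v : V) : Prop := ∀ u, ¬ D u v

/-- Every vertex is reachable from `r` by a directed path. -/
def RootConn {V : Type} (D : V → V → Prop) (r : V) : Prop :=
  ∀ v, Relation.ReflTransGen D r v

/-- The classical cumulants `k_N(q)` of the `q`-semicircular law, via Möbius inversion: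
`k_N(q) = ∑_{π ∈ P(N)} m_π(q) μ(π, 1̂)`. -/
def kq (N : ℕ) : Polynomial ℤ :=
  ∑ π : SetPart (Fin N), (∏ b ∈ π.parts, mNat b.card) * Polynomial.C (mob π (onePart (Fin N)))

/-- Formal logarithm of a power series (with constant term `1`):
`log F = ∑_{k ≥ 1} (-1)^(k+1) (F-1)^k / k`. -/
def pslog {R : Type} [CommRing R] [Algebra ℚ R] (F : PowerSeries R) : PowerSeries R :=
  PowerSeries.mk fun n => ∑ k ∈ Finset.range (n + 1),
    ((-1) ^ (k + 1) / k : ℚ) • (PowerSeries.coeff n ((F - 1) ^ k))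

/-- A noncrossing set partition. -/
def IsNC {β : Type} [LinearOrder β] [Fintype β] [DecidableEq β] (π : SetPart β) : Prop :=
  ∀ b ∈ π.parts, ∀ c ∈ π.parts, b ≠ c → ¬ Crosses b c

/-- The poset of noncrossing partitions, as a subposet of the partition lattice. -/
abbrev NCPart (β : Type) [LinearOrder β] [Fintype β] [DecidableEq β] := {π : SetPart β // IsNC π}

/-- The one-block partition as a noncrossing partition. -/
def ncTop (β : Type) [LinearOrder β] [Fintype β] [DecidableEq β] : NCPart β :=
  ⟨onePart β, by
    intro b hb c hc hne
    exfalso; apply hne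
    have hb' : b ∈ ({(Finset.univ : Finset β)} : Finset (Finset β)).erase ⊥ := hb
    have hc' : c ∈ ({(Finset.univ : Finset β)} : Finset (Finset β)).erase ⊥ := hc
    rw [Finset.mem_singleton.mp (Finset.mem_of_mem_erase hb'),
      Finset.mem_singleton.mp (Finset.mem_of_mem_erase hc')]⟩

/-- The free cumulants `c_N(q)`, via noncrossing Möbius inversion:
`c_N(q) = ∑_{π ∈ NC(N)} m_π(q) μ^{NC}(π, 1̂)`. -/
def cq (N : ℕ) : Polynomial ℤ :=
  ∑ π : NCPart (Fin N), (∏ b ∈ π.1.parts, mNat b.card) * Polynomial.C (mob π (ncTop (Fin N)))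

/-- Moments of the free Poisson law: `m_k(λ) = ∑_{π ∈ NC(k)} λ^{#π}`. -/
def mP (k : ℕ) : Polynomial ℚ := ∑ π : NCPart (Fin k), Polynomial.X ^ π.1.parts.card

-- ===== auxiliary =====

variable {β γ : Type} [LinearOrder β] [Fintype β] [DecidableEq β]
  [LinearOrder γ] [Fintype γ] [DecidableEq γ]

def matchCands (s : Finset β) : Finset (Finset (Finset β)) :=
  s.powerset.powerset.filter fun P => IsMatchingOn P s

def mSum (s : Finset β) : Polynomial ℤ :=
  ∑ P ∈ matchCands s, Polynomial.X ^ croPairs P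

/-- Build a finpartition from a matching-on. -/
def partOfMatch {s : Finset β} (P : Finset (Finset β)) (h : IsMatchingOn P s) :
    Finpartition s where
  parts := P
  supIndep := Finset.supIndep_iff_pairwiseDisjoint.mpr h.2.1
  sup_parts := h.2.2
  bot_notMem := fun hb => by have := h.1 _ hb; simp [Finset.bot_eq_empty] at this

lemma mGen_eq_mSum (s : Finset β) : mGen s = mSum s := by
  refine Finset.sum_bij (fun σ _ => σ.parts) ?_ ?_ ?_ ?_
  · intro σ hσ
    rw [Finset.mem_filter] at hσ
    refine Finset.mem_filter.mpr ⟨?_, hσ.2, σ.disjoint, σ.sup_parts⟩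
    refine Finset.mem_powerset.mpr fun b hb => Finset.mem_powerset.mpr (σ.le hb)
  · intro σ hσ τ hτ h
    cases σ; cases τ; cases h; rfl
  · intro P hP
    rw [matchCands, Finset.mem_filter] at hP
    refine ⟨partOfMatch P hP.2, Finset.mem_filter.mpr ⟨Finset.mem_univ _, hP.2.1⟩, rfl⟩
  · intro σ hσ; rfl

lemma crosses_image {f : β → γ} (hf : StrictMono f) {b c : Finset β} :
    Crosses (b.image f) (c.image f) ↔ Crosses b c := by
  constructor
  · rintro ⟨i, hi, j, hj, k, hk, l, hl, h1, h2, h3⟩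
    simp only [Finset.mem_image] at hi hj hk hl
    obtain ⟨i', hi', rfl⟩ := hi; obtain ⟨j', hj', rfl⟩ := hj
    obtain ⟨k', hk', rfl⟩ := hk; obtain ⟨l', hl', rfl⟩ := hl
    exact ⟨i', hi', j', hj', k', hk', l', hl',
      hf.lt_iff_lt.mp h1, hf.lt_iff_lt.mp h2, hf.lt_iff_lt.mp h3⟩
  · rintro ⟨i, hi, j, hj, k, hk, l, hl, h1, h2, h3⟩
    exact ⟨f i, Finset.mem_image_of_mem f hi, f j, Finset.mem_image_of_mem f hj,
      f k, Finset.mem_image_of_mem f hk, f l, Finset.mem_image_of_mem f hl,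
      hf h1, hf h2, hf h3⟩

lemma sup_image_image {f : β → γ} (P : Finset (Finset β)) :
    (P.image (Finset.image f)).sup id = (P.sup id).image f := by
  ext y
  simp only [Finset.mem_sup, Finset.mem_image, id]
  constructor
  · rintro ⟨c, ⟨p, hp, rfl⟩, hy⟩
    obtain ⟨x, hx, rfl⟩ := Finset.mem_image.mp hy
    exact ⟨x, ⟨p, hp, hx⟩, rfl⟩
  · rintro ⟨x, ⟨p, hp, hxp⟩, rfl⟩
    exact ⟨p.image f, ⟨p, hp, rfl⟩, Finset.mem_image_of_mem f hxp⟩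

lemma isMatchingOn_image {f : β → γ} (hf : Function.Injective f)
    {P : Finset (Finset β)} {s : Finset β} (h : IsMatchingOn P s) :
    IsMatchingOn (P.image (Finset.image f)) (s.image f) := by
  obtain ⟨h1, h2, h3⟩ := h
  refine ⟨?_, ?_, ?_⟩
  · rintro c hc
    obtain ⟨p, hp, rfl⟩ := Finset.mem_image.mp hc
    rw [Finset.card_image_of_injective _ hf]; exact h1 _ hp
  · rintro c hc d hd hne
    rw [Finset.mem_coe] at hc hd
    obtain ⟨p, hp, rfl⟩ := Finset.mem_image.mp hc
    obtain ⟨q, hq, rfl⟩ := Finset.mem_image.mp hd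
    have hpq : p ≠ q := by rintro rfl; exact hne rfl
    have := h2 hp hq hpq
    simp only [Function.onFun, id] at this ⊢
    rw [Finset.disjoint_left] at this ⊢
    rintro x hx hx'
    obtain ⟨a, ha, rfl⟩ := Finset.mem_image.mp hx
    obtain ⟨b, hb, hab⟩ := Finset.mem_image.mp hx'
    exact this ha (hf hab ▸ hb)
  · rw [sup_image_image, h3]

lemma croPairs_image {f : β → γ} (hf : StrictMono f) (P : Finset (Finset β)) :
    croPairs (P.image (Finset.image f)) = croPairs P := by
  have hinj : Function.Injective (Finset.image f) := Finset.image_injective hf.injective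
  unfold croPairs
  have : ((P.image (Finset.image f) ×ˢ P.image (Finset.image f)).filter
      fun p => Crosses p.1 p.2) =
      ((P ×ˢ P).filter fun p => Crosses p.1 p.2).image
        (fun pq => (pq.1.image f, pq.2.image f)) := by
    ext ⟨a, b⟩
    simp only [Finset.mem_filter, Finset.mem_product, Finset.mem_image, Prod.ext_iff]
    constructor
    · rintro ⟨⟨⟨p, hp, rfl⟩, ⟨q, hq, rfl⟩⟩, hcr⟩
      exact ⟨(p, q), ⟨⟨hp, hq⟩, (crosses_image hf).mp hcr⟩, rfl, rfl⟩
    · rintro ⟨⟨p, q⟩, ⟨⟨hp, hq⟩, hcr⟩, rfl, rfl⟩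
      exact ⟨⟨⟨p, hp, rfl⟩, ⟨q, hq, rfl⟩⟩, (crosses_image hf).mpr hcr⟩
  rw [this, Finset.card_image_of_injective]
  intro ⟨a, b⟩ ⟨c, d⟩ h
  simp only [Prod.ext_iff] at h ⊢
  exact ⟨hinj h.1, hinj h.2⟩

lemma isMatchingOn_of_image {f : β → γ} (hf : Function.Injective f)
    {P : Finset (Finset β)} {s : Finset β} (hPs : ∀ p ∈ P, p ⊆ s)
    (h : IsMatchingOn (P.image (Finset.image f)) (s.image f)) : IsMatchingOn P s := by
  obtain ⟨h1, h2, h3⟩ := h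
  refine ⟨?_, ?_, ?_⟩
  · intro p hp
    have := h1 _ (Finset.mem_image_of_mem _ hp)
    rwa [Finset.card_image_of_injective _ hf] at this
  · intro p hp q hq hpq
    rw [Finset.mem_coe] at hp hq
    have hne : p.image f ≠ q.image f := fun h => hpq (Finset.image_injective hf h)
    have := h2 (Finset.mem_coe.mpr (Finset.mem_image_of_mem _ hp))
      (Finset.mem_coe.mpr (Finset.mem_image_of_mem _ hq)) hne
    simp only [Function.onFun, id] at this ⊢
    rw [Finset.disjoint_left] at this ⊢
    intro x hx hx'
    exact this (Finset.mem_image_of_mem f hx) (Finset.mem_image_of_mem f hx')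
  · rw [sup_image_image] at h3
    exact Finset.image_injective hf h3

lemma mSum_image {f : β → γ} (hf : StrictMono f) (s : Finset β) :
    mSum s = mSum (s.image f) := by
  refine Finset.sum_bij (fun P _ => P.image (Finset.image f)) ?_ ?_ ?_ ?_
  · intro P hP
    rw [matchCands, Finset.mem_filter] at hP ⊢
    refine ⟨Finset.mem_powerset.mpr ?_, isMatchingOn_image hf.injective hP.2⟩
    intro c hc
    obtain ⟨p, hp, rfl⟩ := Finset.mem_image.mp hc
    exact Finset.mem_powerset.mpr (Finset.image_subset_image
      (Finset.mem_powerset.mp (Finset.mem_powerset.mp hP.1 hp)))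
  · intro P _ Q _ h
    exact Finset.image_injective (Finset.image_injective hf.injective) h
  · intro Q hQ
    rw [matchCands, Finset.mem_filter] at hQ
    set P : Finset (Finset β) := Q.image (fun c => s.filter (fun x => f x ∈ c)) with hPdef
    have key : ∀ c ∈ Q, (s.filter (fun x => f x ∈ c)).image f = c := by
      intro c hc
      have hcs : c ⊆ s.image f := Finset.mem_powerset.mp (Finset.mem_powerset.mp hQ.1 hc)
      ext y
      constructor
      · intro hy
        obtain ⟨x, hx, rfl⟩ := Finset.mem_image.mp hy
        exact (Finset.mem_filter.mp hx).2
      · intro hy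
        obtain ⟨x, hx, rfl⟩ := Finset.mem_image.mp (hcs hy)
        exact Finset.mem_image_of_mem f (Finset.mem_filter.mpr ⟨hx, hy⟩)
    have himg : P.image (Finset.image f) = Q := by
      rw [hPdef, Finset.image_image]
      ext c
      simp only [Finset.mem_image, Function.comp]
      constructor
      · rintro ⟨d, hd, rfl⟩; rw [key d hd]; exact hd
      · intro hc; exact ⟨c, hc, key c hc⟩
    refine ⟨P, ?_, himg⟩
    rw [matchCands, Finset.mem_filter]
    refine ⟨Finset.mem_powerset.mpr ?_, ?_⟩
    · intro p hp
      obtain ⟨c, hc, rfl⟩ := Finset.mem_image.mp hp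
      exact Finset.mem_powerset.mpr (Finset.filter_subset _ _)
    · refine isMatchingOn_of_image hf.injective ?_ (himg ▸ hQ.2)
      intro p hp
      obtain ⟨c, hc, rfl⟩ := Finset.mem_image.mp hp
      exact Finset.filter_subset _ _
  · intro P hP
    rw [croPairs_image hf]

lemma mNat_card (s : Finset β) : mNat s.card = mSum s := by
  rw [mNat, mGen_eq_mSum]
  have hf : StrictMono (fun i => ((s.orderIsoOfFin rfl) i : β)) :=
    fun a b hab => by exact_mod_cast (s.orderIsoOfFin rfl).strictMono hab
  rw [mSum_image hf]
  congr 1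
  ext y
  simp only [Finset.mem_image, Finset.mem_univ, true_and]
  constructor
  · rintro ⟨i, rfl⟩; exact ((s.orderIsoOfFin rfl) i).2
  · intro hy; exact ⟨(s.orderIsoOfFin rfl).symm ⟨y, hy⟩, by simp⟩

def bigCands (π : SetPart β) : Finset (Finset (Finset β)) :=
  (Finset.univ : Finset β).powerset.powerset.filter
    (fun P => IsMatchingOn P Finset.univ ∧ ∀ p ∈ P, ∃ b ∈ π.parts, p ⊆ b)

def cro2P (π : SetPart β) (P : Finset (Finset β)) : ℕ :=
  ((P ×ˢ P).filter fun p => Crosses p.1 p.2 ∧ ∃ B ∈ π.parts, p.1 ∪ p.2 ⊆ B).card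

lemma block_subset {b : Finset β} {Q : Finset (Finset β)} (h : IsMatchingOn Q b)
    {p : Finset β} (hp : p ∈ Q) : p ⊆ b := h.2.2 ▸ Finset.le_sup (f := id) hp

lemma crosses_nonempty_left {b c : Finset β} (h : Crosses b c) : b.Nonempty := by
  obtain ⟨i, hi, _⟩ := h; exact ⟨i, hi⟩

lemma crosses_nonempty_right {b c : Finset β} (h : Crosses b c) : c.Nonempty := by
  obtain ⟨_, _, _, _, k, hk, _⟩ := h; exact ⟨k, hk⟩

lemma phi_filter (π : SetPart β) (g : ∀ a ∈ π.parts, Finset (Finset β))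
    (hg : ∀ a (ha : a ∈ π.parts), IsMatchingOn (g a ha) a)
    (b : Finset β) (hb : b ∈ π.parts) :
    (π.parts.attach.biUnion (fun x => g x.1 x.2)).filter (· ⊆ b) = g b hb := by
  ext p
  simp only [Finset.mem_filter, Finset.mem_biUnion, Finset.mem_attach, true_and,
    Subtype.exists]
  constructor
  · rintro ⟨⟨c, hc, hpc⟩, hpb⟩
    have hpne : p.Nonempty := Finset.card_pos.mp (by rw [(hg c hc).1 p hpc]; norm_num)
    have hpc' : p ⊆ c := block_subset (hg c hc) hpc
    obtain ⟨x, hx⟩ := hpne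
    have : c = b := π.eq_of_mem_parts hc hb (hpc' hx) (hpb hx)
    subst this; exact hpc
  · intro hp
    exact ⟨⟨b, hb, hp⟩, block_subset (hg b hb) hp⟩

lemma phi_matching (π : SetPart β) (g : ∀ a ∈ π.parts, Finset (Finset β))
    (hg : ∀ a (ha : a ∈ π.parts), IsMatchingOn (g a ha) a) :
    IsMatchingOn (π.parts.attach.biUnion (fun x => g x.1 x.2)) Finset.univ := by
  refine ⟨?_, ?_, ?_⟩
  · intro p hp
    obtain ⟨x, _, hpx⟩ := Finset.mem_biUnion.mp hp
    exact (hg x.1 x.2).1 p hpx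
  · intro p hp q hq hpq
    rw [Finset.mem_coe] at hp hq
    obtain ⟨x, _, hpx⟩ := Finset.mem_biUnion.mp hp
    obtain ⟨y, _, hqy⟩ := Finset.mem_biUnion.mp hq
    by_cases hxy : x = y
    · subst hxy
      exact (hg x.1 x.2).2.1 (Finset.mem_coe.mpr hpx) (Finset.mem_coe.mpr hqy) hpq
    · have hdisj : Disjoint x.1 y.1 :=
        π.disjoint x.2 y.2 (fun h => hxy (Subtype.ext h))
      simp only [Function.onFun, id]
      exact hdisj.mono (block_subset (hg x.1 x.2) hpx) (block_subset (hg y.1 y.2) hqy)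
  · rw [Finset.sup_biUnion]
    have : (π.parts.attach.sup fun x => (g x.1 x.2).sup id) =
        π.parts.attach.sup (fun x => x.1) := by
      apply Finset.sup_congr rfl
      intro x _; exact (hg x.1 x.2).2.2
    rw [this]
    have h2 : (π.parts.attach.sup fun x => (x : Finset β)) = π.parts.sup id :=
      Finset.sup_attach π.parts id
    rw [h2, π.sup_parts]

lemma phi_cro2P (π : SetPart β) (g : ∀ a ∈ π.parts, Finset (Finset β))
    (hg : ∀ a (ha : a ∈ π.parts), IsMatchingOn (g a ha) a) :
    cro2P π (π.parts.attach.biUnion (fun x => g x.1 x.2)) =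
      ∑ x ∈ π.parts.attach, croPairs (g x.1 x.2) := by
  set T := π.parts.attach.biUnion (fun x => g x.1 x.2) with hT
  have hset : ((T ×ˢ T).filter fun p => Crosses p.1 p.2 ∧ ∃ B ∈ π.parts, p.1 ∪ p.2 ⊆ B) =
      π.parts.attach.biUnion
        (fun x => ((g x.1 x.2) ×ˢ (g x.1 x.2)).filter fun p => Crosses p.1 p.2) := by
    ext ⟨p, q⟩
    simp only [Finset.mem_filter, Finset.mem_product, Finset.mem_biUnion, Finset.mem_attach,
      true_and, Subtype.exists]
    constructor
    · rintro ⟨⟨hp, hq⟩, hcr, B, hB, hun⟩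
      rw [hT] at hp hq
      obtain ⟨c, hc, hpc⟩ := by
        simpa only [Finset.mem_biUnion, Finset.mem_attach, true_and, Subtype.exists] using hp
      obtain ⟨c', hc', hqc⟩ := by
        simpa only [Finset.mem_biUnion, Finset.mem_attach, true_and, Subtype.exists] using hq
      obtain ⟨i, hi⟩ := crosses_nonempty_left hcr
      obtain ⟨k, hk⟩ := crosses_nonempty_right hcr
      have hcB : c = B := π.eq_of_mem_parts hc hB (block_subset (hg c hc) hpc hi)
        (hun (Finset.mem_union_left _ hi))
      have hcB' : c' = B := π.eq_of_mem_parts hc' hB (block_subset (hg c' hc') hqc hk)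
        (hun (Finset.mem_union_right _ hk))
      subst hcB
      exact ⟨c, hc, ⟨hpc, hcB' ▸ hqc⟩, hcr⟩
    · rintro ⟨b, hb, ⟨hp, hq⟩, hcr⟩
      refine ⟨⟨?_, ?_⟩, hcr, b, hb, Finset.union_subset
        (block_subset (hg b hb) hp) (block_subset (hg b hb) hq)⟩
      · exact Finset.mem_biUnion.mpr ⟨⟨b, hb⟩, Finset.mem_attach _ _, hp⟩
      · exact Finset.mem_biUnion.mpr ⟨⟨b, hb⟩, Finset.mem_attach _ _, hq⟩
  rw [cro2P, hset, Finset.card_biUnion]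
  · rfl
  · intro x _ y _ hxy
    rw [Function.onFun, Finset.disjoint_left]
    rintro ⟨p, q⟩ hpq hpq'
    rw [Finset.mem_filter, Finset.mem_product] at hpq hpq'
    obtain ⟨i, hi⟩ := crosses_nonempty_left hpq.2
    have : x.1 = y.1 := π.eq_of_mem_parts x.2 y.2
      (block_subset (hg x.1 x.2) hpq.1.1 hi) (block_subset (hg y.1 y.2) hpq'.1.1 hi)
    exact hxy (Subtype.ext this)

lemma prod_mSum (π : SetPart β) :
    ∏ b ∈ π.parts, mSum b = ∑ P ∈ bigCands π, Polynomial.X ^ cro2P π P := by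
  unfold mSum
  rw [Finset.prod_sum]
  refine Finset.sum_bij (fun g _ => π.parts.attach.biUnion (fun x => g x.1 x.2)) ?_ ?_ ?_ ?_
  · intro g hg
    rw [Finset.mem_pi] at hg
    have hg' : ∀ a (ha : a ∈ π.parts), IsMatchingOn (g a ha) a := fun a ha =>
      (Finset.mem_filter.mp (hg a ha)).2
    rw [bigCands, Finset.mem_filter]
    refine ⟨Finset.mem_powerset.mpr fun p _ => Finset.mem_powerset.mpr (Finset.subset_univ p),
      phi_matching π g hg', ?_⟩
    intro p hp
    obtain ⟨x, _, hpx⟩ := Finset.mem_biUnion.mp hp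
    exact ⟨x.1, x.2, block_subset (hg' x.1 x.2) hpx⟩
  · intro g hg g' hg' h
    rw [Finset.mem_pi] at hg hg'
    funext a ha
    rw [← phi_filter π g (fun a ha => (Finset.mem_filter.mp (hg a ha)).2) a ha,
      ← phi_filter π g' (fun a ha => (Finset.mem_filter.mp (hg' a ha)).2) a ha, h]
  · intro P hP
    rw [bigCands, Finset.mem_filter] at hP
    obtain ⟨-, hPm, hPle⟩ := hP
    refine ⟨fun b _ => P.filter (· ⊆ b), ?_, ?_⟩
    · rw [Finset.mem_pi]
      intro b hb
      rw [matchCands, Finset.mem_filter]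
      refine ⟨Finset.mem_powerset.mpr fun p hp =>
        Finset.mem_powerset.mpr (Finset.mem_filter.mp hp).2, ?_, ?_, ?_⟩
      · intro p hp; exact hPm.1 p (Finset.mem_filter.mp hp).1
      · exact hPm.2.1.subset (fun p hp => (Finset.mem_filter.mp hp).1)
      · apply le_antisymm
        · exact Finset.sup_le fun p hp => (Finset.mem_filter.mp hp).2
        · intro x hx
          have hxu : x ∈ P.sup id := hPm.2.2 ▸ Finset.mem_univ x
          obtain ⟨p, hp, hxp⟩ := Finset.mem_sup.mp hxu
          obtain ⟨c, hc, hpc⟩ := hPle p hp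
          have : c = b := π.eq_of_mem_parts hc hb (hpc hxp) hx
          subst this
          exact Finset.mem_sup.mpr ⟨p, Finset.mem_filter.mpr ⟨hp, hpc⟩, hxp⟩
    · ext p
      simp only [Finset.mem_biUnion, Finset.mem_attach, true_and, Subtype.exists,
        Finset.mem_filter]
      constructor
      · rintro ⟨b, hb, hp, -⟩; exact hp
      · intro hp
        obtain ⟨b, hb, hpb⟩ := hPle p hp
        exact ⟨b, hb, hp, hpb⟩
  · intro g hg
    rw [Finset.mem_pi] at hg
    have hg' : ∀ a (ha : a ∈ π.parts), IsMatchingOn (g a ha) a := fun a ha =>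
      (Finset.mem_filter.mp (hg a ha)).2
    rw [Finset.prod_pow_eq_pow_sum, phi_cro2P π g hg']

/-- `m_π(q) = ∑_{σ ∈ M(2n), σ ≤ π} q^{cro(σ,π)}`. -/
theorem statement4 (n : ℕ) (π : SetPart (Fin (2 * n))) :
    ∏ b ∈ π.parts, mNat b.card =
      ∑ σ ∈ (Finset.univ : Finset (SetPart (Fin (2 * n)))).filter
          (fun σ => IsMatching σ ∧ σ ≤ π), Polynomial.X ^ cro2 σ π := by
  have h1 : ∏ b ∈ π.parts, mNat b.card = ∏ b ∈ π.parts, mSum b :=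
    Finset.prod_congr rfl fun b _ => mNat_card b
  rw [h1, prod_mSum π]
  refine (Finset.sum_bij (fun σ _ => σ.parts) ?_ ?_ ?_ ?_).symm
  · intro σ hσ
    rw [Finset.mem_filter] at hσ
    rw [bigCands, Finset.mem_filter]
    exact ⟨Finset.mem_powerset.mpr fun p _ => Finset.mem_powerset.mpr (Finset.subset_univ p),
      ⟨hσ.2.1, σ.disjoint, σ.sup_parts⟩, fun p hp => hσ.2.2 hp⟩
  · intro σ _ τ _ h
    cases σ; cases τ; cases h; rfl
  · intro P hP
    rw [bigCands, Finset.mem_filter] at hP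
    refine ⟨partOfMatch P hP.2.1, Finset.mem_filter.mpr ⟨Finset.mem_univ _, hP.2.1.1, ?_⟩, rfl⟩
    intro p hp
    exact hP.2.2 p hp
  · intro σ hσ; rfl

end
end

section
/- If e is a non-loop edge of a graph G = (V,E) with n = |V|, then U_G(q) - U_{G\e}(q) = U_{G/e}(q), where U_G(q) = (q-1)^{-(n-1)} Σ_{π∈P(V)} q^{i(E,π)} μ(π,1̂). -/
open Finset

noncomputable section
open scoped Classical

set_option linter.unusedSectionVars false

-- basic lemmas
section Aux
variable {V : Type} [Fintype V] [DecidableEq V] {x y : V}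

lemma finpart_ext {s : Finset V} {P Q : Finpartition s} (h : P.parts = Q.parts) : P = Q := by
  cases P; cases Q; simpa using h

lemma onePart_parts [Nonempty V] : (onePart V).parts = {Finset.univ} := by
  have : (⊥ : Finset V) ∉ ({Finset.univ} : Finset (Finset V)) := by
    simp only [Finset.mem_singleton, Finset.bot_eq_empty]
    exact fun h => (Finset.univ_nonempty (α := V)).ne_empty h.symm
  show ({Finset.univ} : Finset (Finset V)).erase ⊥ = {Finset.univ}
  exact Finset.erase_eq_of_notMem this

def cmap (hxy : x ≠ y) (v : V) : {v : V // v ≠ y} :=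
  if h : v = y then ⟨x, hxy⟩ else ⟨v, h⟩

variable (hxy : x ≠ y)

lemma cmap_val {v : V} (h : v ≠ y) : cmap hxy v = ⟨v, h⟩ := dif_neg h

lemma cmap_surj (v' : {v : V // v ≠ y}) : cmap hxy v'.1 = v' := by
  simpa using cmap_val hxy v'.2

lemma cmap_x : cmap hxy x = ⟨x, hxy⟩ := cmap_val hxy hxy
lemma cmap_y : cmap hxy y = ⟨x, hxy⟩ := dif_pos rfl

lemma cmap_eq_cases {u w : V} (h : cmap hxy u = cmap hxy w) :
    u = w ∨ (u = x ∧ w = y) ∨ (u = y ∧ w = x) := by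
  unfold cmap at h
  split_ifs at h with h1 h2 h2
  · subst h1; subst h2; exact Or.inl rfl
  · simp [Subtype.ext_iff] at h; exact Or.inr (Or.inr ⟨h1, h.symm⟩)
  · simp [Subtype.ext_iff] at h; exact Or.inr (Or.inl ⟨h, h2⟩)
  · simp [Subtype.ext_iff] at h; exact Or.inl h

/-- `SB π`: `x` and `y` lie in the same block. -/
def SB (π : SetPart V) : Prop := ∃ b ∈ π.parts, x ∈ b ∧ y ∈ b

def pre (b' : Finset {v : V // v ≠ y}) : Finset V :=
  Finset.univ.filter (fun v => cmap hxy v ∈ b')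

lemma mem_pre {v : V} {b' : Finset {v : V // v ≠ y}} :
    v ∈ pre hxy b' ↔ cmap hxy v ∈ b' := by simp [pre]

lemma pre_mono {b' c' : Finset {v : V // v ≠ y}} (h : b' ⊆ c') :
    pre hxy b' ⊆ pre hxy c' := fun v hv => (mem_pre hxy).2 (h ((mem_pre hxy).1 hv))

lemma image_pre (b' : Finset {v : V // v ≠ y}) :
    (pre hxy b').image (cmap hxy) = b' := by
  ext v'
  simp only [Finset.mem_image, mem_pre]
  constructor
  · rintro ⟨v, hv, rfl⟩; exact hv
  · intro hv'; exact ⟨v'.1, by rw [cmap_surj hxy]; exact hv', cmap_surj hxy v'⟩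

lemma pre_image {b : Finset V} (hb : x ∈ b ↔ y ∈ b) :
    pre hxy (b.image (cmap hxy)) = b := by
  ext v
  simp only [mem_pre, Finset.mem_image]
  constructor
  · rintro ⟨u, hu, h⟩
    rcases cmap_eq_cases hxy h with rfl | ⟨rfl, rfl⟩ | ⟨rfl, rfl⟩
    · exact hu
    · exact hb.1 hu
    · exact hb.2 hu
  · intro hv; exact ⟨v, hv, rfl⟩

lemma pre_univ : pre hxy (Finset.univ : Finset {v : V // v ≠ y}) = Finset.univ := by
  ext v; simp [mem_pre]

lemma pre_inj {b' c' : Finset {v : V // v ≠ y}} (h : pre hxy b' = pre hxy c') : b' = c' := by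
  rw [← image_pre hxy b', ← image_pre hxy c', h]

/-- The "expansion" of a partition of `V ∖ {y}` to a partition of `V` with `x ∼ y`. -/
def expand (π' : SetPart {v : V // v ≠ y}) : SetPart V where
  parts := π'.parts.image (pre hxy)
  supIndep := by
    rw [Finset.supIndep_iff_pairwiseDisjoint]
    rintro a ha b hb hab
    simp only [Finset.coe_image, Set.mem_image, Finset.mem_coe] at ha hb
    obtain ⟨a', ha', rfl⟩ := ha
    obtain ⟨b', hb', rfl⟩ := hb
    have hne : a' ≠ b' := fun h => hab (by rw [h])
    show Disjoint (pre hxy a') (pre hxy b')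
    rw [Finset.disjoint_left]
    intro v hva hvb
    exact Finset.disjoint_left.1 (π'.disjoint ha' hb' hne)
      ((mem_pre hxy).1 hva) ((mem_pre hxy).1 hvb)
  sup_parts := by
    apply le_antisymm le_top
    intro v _
    obtain ⟨b', hb', hvb'⟩ := π'.exists_mem (Finset.mem_univ (cmap hxy v))
    rw [Finset.mem_sup]
    exact ⟨pre hxy b', Finset.mem_image_of_mem _ hb', (mem_pre hxy).2 hvb'⟩
  bot_notMem := by
    simp only [Finset.mem_image, not_exists, not_and]
    intro b' hb' h
    obtain ⟨v', hv'⟩ := π'.nonempty_of_mem_parts hb'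
    have : v'.1 ∈ pre hxy b' := (mem_pre hxy).2 (by rw [cmap_surj hxy]; exact hv')
    rw [h] at this
    exact Finset.notMem_empty _ this

lemma expand_parts (π' : SetPart {v : V // v ≠ y}) :
    (expand hxy π').parts = π'.parts.image (pre hxy) := rfl

lemma SB_expand (π' : SetPart {v : V // v ≠ y}) : SB (x := x) (y := y) (expand hxy π') := by
  obtain ⟨b', hb', hxb'⟩ := π'.exists_mem (Finset.mem_univ (cmap hxy x))
  refine ⟨pre hxy b', Finset.mem_image_of_mem _ hb', (mem_pre hxy).2 hxb', (mem_pre hxy).2 ?_⟩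
  rw [cmap_y, ← cmap_x hxy]; exact hxb'

lemma block_xy_iff {π : SetPart V} (h : SB (x := x) (y := y) π) {b : Finset V}
    (hb : b ∈ π.parts) : x ∈ b ↔ y ∈ b := by
  obtain ⟨b0, hb0, hx0, hy0⟩ := h
  constructor
  · intro hxb; rwa [π.eq_of_mem_parts hb hb0 hxb hx0]
  · intro hyb; rwa [π.eq_of_mem_parts hb hb0 hyb hy0]

/-- Collapse a partition of `V` with `x ∼ y` to a partition of `V ∖ {y}`. -/
def collapseP (π : SetPart V) (h : SB (x := x) (y := y) π) : SetPart {v : V // v ≠ y} where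
  parts := π.parts.image (Finset.image (cmap hxy))
  supIndep := by
    rw [Finset.supIndep_iff_pairwiseDisjoint]
    rintro a ha b hb hab
    simp only [Finset.coe_image, Set.mem_image, Finset.mem_coe] at ha hb
    obtain ⟨a0, ha0, rfl⟩ := ha
    obtain ⟨b0, hb0, rfl⟩ := hb
    have hne : a0 ≠ b0 := fun hh => hab (by rw [hh])
    show Disjoint (a0.image (cmap hxy)) (b0.image (cmap hxy))
    rw [Finset.disjoint_left]
    rintro v' hva hvb
    simp only [Finset.mem_image] at hva hvb
    obtain ⟨u, hu, rfl⟩ := hva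
    obtain ⟨w, hw, hww⟩ := hvb
    have hd := π.disjoint ha0 hb0 hne
    rcases cmap_eq_cases hxy hww.symm with rfl | ⟨rfl, rfl⟩ | ⟨rfl, rfl⟩
    · exact Finset.disjoint_left.1 hd hu hw
    · exact Finset.disjoint_left.1 hd hu ((block_xy_iff h hb0).2 hw)
    · exact Finset.disjoint_left.1 hd ((block_xy_iff h ha0).2 hu) hw
  sup_parts := by
    apply le_antisymm le_top
    intro v' _
    obtain ⟨b, hb, hvb⟩ := π.exists_mem (Finset.mem_univ v'.1)
    rw [Finset.mem_sup]
    exact ⟨b.image (cmap hxy), Finset.mem_image_of_mem _ hb,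
      by rw [← cmap_surj hxy v']; exact Finset.mem_image_of_mem _ hvb⟩
  bot_notMem := by
    simp only [Finset.mem_image, not_exists, not_and]
    intro b hb hh
    obtain ⟨v, hv⟩ := π.nonempty_of_mem_parts hb
    have : cmap hxy v ∈ b.image (cmap hxy) := Finset.mem_image_of_mem _ hv
    rw [hh] at this
    exact Finset.notMem_empty _ this

lemma collapseP_parts (π : SetPart V) (h : SB (x := x) (y := y) π) :
    (collapseP hxy π h).parts = π.parts.image (Finset.image (cmap hxy)) := rfl

lemma expand_collapse (π : SetPart V) (h : SB (x := x) (y := y) π) :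
    expand hxy (collapseP hxy π h) = π := by
  apply finpart_ext
  rw [expand_parts, collapseP_parts, Finset.image_image]
  have : ∀ b ∈ π.parts, (pre hxy ∘ Finset.image (cmap hxy)) b = id b := by
    intro b hb
    exact pre_image hxy (block_xy_iff h hb)
  rw [Finset.image_congr this, Finset.image_id]

lemma collapse_expand (π' : SetPart {v : V // v ≠ y}) (h : SB (x := x) (y := y) (expand hxy π')) :
    collapseP hxy (expand hxy π') h = π' := by
  apply finpart_ext
  rw [collapseP_parts, expand_parts, Finset.image_image]
  have : ∀ b' ∈ π'.parts, (Finset.image (cmap hxy) ∘ pre hxy) b' = id b' := by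
    intro b' _; exact image_pre hxy b'
  rw [Finset.image_congr this, Finset.image_id]

lemma expand_inj {π' τ' : SetPart {v : V // v ≠ y}} (h : expand hxy π' = expand hxy τ') :
    π' = τ' := by
  rw [← collapse_expand hxy π' (SB_expand hxy π'), ← collapse_expand hxy τ' (SB_expand hxy τ')]
  congr 1

lemma expand_mono {π' τ' : SetPart {v : V // v ≠ y}} (h : π' ≤ τ') :
    expand hxy π' ≤ expand hxy τ' := by
  intro b hb
  rw [expand_parts, Finset.mem_image] at hb
  obtain ⟨b', hb', rfl⟩ := hb
  obtain ⟨c', hc', hbc⟩ := h hb'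
  exact ⟨pre hxy c', Finset.mem_image_of_mem _ hc', pre_mono hxy hbc⟩

lemma collapse_mono {π τ : SetPart V} (hπ : SB (x := x) (y := y) π)
    (hτ : SB (x := x) (y := y) τ) (h : π ≤ τ) :
    collapseP hxy π hπ ≤ collapseP hxy τ hτ := by
  intro b' hb'
  rw [collapseP_parts, Finset.mem_image] at hb'
  obtain ⟨b, hb, rfl⟩ := hb'
  obtain ⟨c, hc, hbc⟩ := h hb
  exact ⟨c.image (cmap hxy), Finset.mem_image_of_mem _ hc, Finset.image_subset_image hbc⟩

lemma SB_mono {π τ : SetPart V} (h : SB (x := x) (y := y) π) (hle : π ≤ τ) :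
    SB (x := x) (y := y) τ := by
  obtain ⟨b, hb, hxb, hyb⟩ := h
  obtain ⟨c, hc, hbc⟩ := hle hb
  exact ⟨c, hc, hbc hxb, hbc hyb⟩

lemma expand_strictMono {π' τ' : SetPart {v : V // v ≠ y}} (h : π' < τ') :
    expand hxy π' < expand hxy τ' :=
  lt_of_le_of_ne (expand_mono hxy h.le) (fun hh => h.ne (expand_inj hxy hh))

lemma expand_top : expand hxy (onePart {v : V // v ≠ y}) = onePart V := by
  have : Nonempty V := ⟨x⟩
  have : Nonempty {v : V // v ≠ y} := ⟨⟨x, hxy⟩⟩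
  apply finpart_ext
  rw [expand_parts, onePart_parts, onePart_parts, Finset.image_singleton, pre_univ]

lemma chainSet_empty {α : Type} [Fintype α] [PartialOrder α] (a b : α) {k : ℕ}
    (hk : Fintype.card α ≤ k) :
    ((Finset.univ : Finset (Fin (k + 1) → α)).filter
      (fun c => c 0 = a ∧ c (Fin.last k) = b ∧ ∀ i : Fin k, c i.castSucc < c i.succ)) = ∅ := by
  rw [Finset.filter_eq_empty_iff]
  rintro c - ⟨-, -, hc⟩
  have hsm : StrictMono c := Fin.strictMono_iff_lt_succ.2 hc
  have h2 := Fintype.card_le_of_injective c hsm.injective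
  rw [Fintype.card_fin] at h2
  omega

lemma mob_eq_sum {α : Type} [Fintype α] [PartialOrder α] (a b : α) (N : ℕ)
    (hN : Fintype.card α ≤ N) :
    mob a b = ∑ k ∈ Finset.range (N + 1), (-1 : ℤ) ^ k *
      ((Finset.univ : Finset (Fin (k + 1) → α)).filter
        (fun c => c 0 = a ∧ c (Fin.last k) = b ∧ ∀ i : Fin k, c i.castSucc < c i.succ)).card := by
  rw [mob]
  apply Finset.sum_subset
  · exact Finset.range_subset_range.2 (by omega)
  · intro k hk hk'
    rw [Finset.mem_range] at hk
    rw [Finset.mem_range, not_lt] at hk'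
    rw [chainSet_empty a b (by omega)]
    simp

lemma chain_bij (π' : SetPart {v : V // v ≠ y}) (k : ℕ) :
    ((Finset.univ : Finset (Fin (k + 1) → SetPart {v : V // v ≠ y})).filter
      (fun c => c 0 = π' ∧ c (Fin.last k) = onePart {v : V // v ≠ y} ∧
        ∀ i : Fin k, c i.castSucc < c i.succ)).card =
    ((Finset.univ : Finset (Fin (k + 1) → SetPart V)).filter
      (fun c => c 0 = expand hxy π' ∧ c (Fin.last k) = onePart V ∧
        ∀ i : Fin k, c i.castSucc < c i.succ)).card := by
  apply Finset.card_bij (fun c' _ => fun i => expand hxy (c' i))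
  · rintro c' hc'
    rw [Finset.mem_filter] at hc' ⊢
    obtain ⟨-, h0, hl, hs⟩ := hc'
    refine ⟨Finset.mem_univ _, ?_, ?_, fun i => expand_strictMono hxy (hs i)⟩
    · show expand hxy (c' 0) = expand hxy π'
      rw [h0]
    · show expand hxy (c' (Fin.last k)) = onePart V
      rw [hl, expand_top]
  · intro c₁ h₁ c₂ h₂ h
    funext i
    exact expand_inj hxy (congrFun h i)
  · intro c hc
    rw [Finset.mem_filter] at hc
    obtain ⟨-, h0, hl, hs⟩ := hc
    have hsm : StrictMono c := Fin.strictMono_iff_lt_succ.2 hs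
    have hSB : ∀ i, SB (x := x) (y := y) (c i) := by
      intro i
      have h00 : SB (x := x) (y := y) (c 0) := by rw [h0]; exact SB_expand hxy π'
      exact SB_mono h00 (hsm.monotone (Fin.zero_le i))
    refine ⟨fun i => collapseP hxy (c i) (hSB i), ?_, ?_⟩
    · rw [Finset.mem_filter]
      refine ⟨Finset.mem_univ _, ?_, ?_, ?_⟩
      · apply expand_inj hxy
        rw [expand_collapse, h0]
      · apply expand_inj hxy
        rw [expand_collapse, hl, expand_top]
      · intro i
        refine lt_of_le_of_ne (collapse_mono hxy _ _ (hsm (Fin.castSucc_lt_succ (i := i))).le) ?_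
        intro hh
        have := congrArg (fun z => expand hxy z) hh
        simp only [expand_collapse] at this
        exact (hsm (Fin.castSucc_lt_succ (i := i))).ne this
    · funext i
      exact expand_collapse hxy (c i) (hSB i)

lemma mob_expand (π' : SetPart {v : V // v ≠ y}) :
    mob (expand hxy π') (onePart V) = mob π' (onePart {v : V // v ≠ y}) := by
  rw [mob_eq_sum _ _ (max (Fintype.card (SetPart V)) (Fintype.card (SetPart {v : V // v ≠ y})))
      (le_max_left _ _),
    mob_eq_sum _ _ (max (Fintype.card (SetPart V)) (Fintype.card (SetPart {v : V // v ≠ y})))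
      (le_max_right _ _)]
  apply Finset.sum_congr rfl
  intro k _
  congr 1
  convert congrArg (Nat.cast : ℕ → ℤ) (chain_bij hxy π' k).symm

end Aux

section Main
variable {V E : Type} [Fintype V] [DecidableEq V] [Fintype E] {x y : V}
  (hxy : x ≠ y) (ends : E → Sym2 V) (e : E)

lemma iE_del_eq (π : SetPart V) :
    iE (fun e' : {f : E // f ≠ e} => ends e'.1) π =
      (Finset.univ.filter
        (fun f : E => (∃ b ∈ π.parts, ∀ v ∈ ends f, v ∈ b) ∧ ¬ f = e)).card := by
  unfold iE
  apply Finset.card_bij (fun a _ => a.1)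
  · rintro a ha
    rw [Finset.mem_filter] at ha ⊢
    exact ⟨Finset.mem_univ _, ha.2, a.2⟩
  · intro a _ b _ h
    exact Subtype.ext h
  · intro f hf
    rw [Finset.mem_filter] at hf
    exact ⟨⟨f, hf.2.2⟩, Finset.mem_filter.2 ⟨Finset.mem_univ _, hf.2.1⟩, rfl⟩

lemma internal_iff_SB (he : ends e = s(x, y)) (π : SetPart V) :
    (∃ b ∈ π.parts, ∀ v ∈ ends e, v ∈ b) ↔ SB (x := x) (y := y) π := by
  rw [he]
  constructor
  · rintro ⟨b, hb, h⟩
    exact ⟨b, hb, h x (Sym2.mem_iff.2 (Or.inl rfl)), h y (Sym2.mem_iff.2 (Or.inr rfl))⟩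
  · rintro ⟨b, hb, hxb, hyb⟩
    refine ⟨b, hb, fun v hv => ?_⟩
    rcases Sym2.mem_iff.1 hv with rfl | rfl
    · exact hxb
    · exact hyb

lemma iE_split (he : ends e = s(x, y)) (π : SetPart V) :
    iE ends π = iE (fun e' : {f : E // f ≠ e} => ends e'.1) π +
      (if SB (x := x) (y := y) π then 1 else 0) := by
  classical
  have hsetP : Finset.univ.filter (fun f : E => ∃ b ∈ π.parts, ∀ v ∈ ends f, v ∈ b) =
      (Finset.univ.filter (fun f : E => (∃ b ∈ π.parts, ∀ v ∈ ends f, v ∈ b) ∧ ¬ f = e)) ∪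
        (if ∃ b ∈ π.parts, ∀ v ∈ ends e, v ∈ b then {e} else ∅) := by
    ext f
    by_cases hfe : f = e
    · subst hfe
      by_cases hPf : ∃ b ∈ π.parts, ∀ v ∈ ends f, v ∈ b
      · simp [hPf]
      · simp [hPf]
    · by_cases hPf : ∃ b ∈ π.parts, ∀ v ∈ ends f, v ∈ b
      · split_ifs <;> simp [hPf, hfe]
      · split_ifs <;> simp [hPf, hfe]
  have hdisj : Disjoint
      (Finset.univ.filter (fun f : E => (∃ b ∈ π.parts, ∀ v ∈ ends f, v ∈ b) ∧ ¬ f = e))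
      (if ∃ b ∈ π.parts, ∀ v ∈ ends e, v ∈ b then {e} else ∅) := by
    split_ifs
    · rw [Finset.disjoint_singleton_right]
      simp
    · exact Finset.disjoint_empty_right _
  have h2 : iE ends π =
      (Finset.univ.filter
        (fun f : E => (∃ b ∈ π.parts, ∀ v ∈ ends f, v ∈ b) ∧ ¬ f = e)).card +
      (if ∃ b ∈ π.parts, ∀ v ∈ ends e, v ∈ b then 1 else 0) := by
    show (Finset.univ.filter (fun f : E => ∃ b ∈ π.parts, ∀ v ∈ ends f, v ∈ b)).card = _
    rw [hsetP, Finset.card_union_of_disjoint hdisj]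
    congr 1
    split_ifs <;> simp
  rw [h2, iE_del_eq]
  congr 1
  simp only [internal_iff_SB ends e he π]

lemma iE_contract (π' : SetPart {v : V // v ≠ y}) :
    iE (fun e' : {f : E // f ≠ e} => ends e'.1) (expand hxy π') =
      iE (fun e' : {f : E // f ≠ e} => (ends e'.1).map (cmap hxy)) π' := by
  unfold iE
  congr 1
  apply Finset.filter_congr
  intro e' _
  simp only
  constructor
  · rintro ⟨b, hb, h⟩
    rw [expand_parts, Finset.mem_image] at hb
    obtain ⟨b', hb', rfl⟩ := hb
    refine ⟨b', hb', fun v' hv' => ?_⟩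
    rw [Sym2.mem_map] at hv'
    obtain ⟨v, hv, rfl⟩ := hv'
    exact (mem_pre hxy).1 (h v hv)
  · rintro ⟨b', hb', h⟩
    refine ⟨pre hxy b', by rw [expand_parts]; exact Finset.mem_image_of_mem _ hb',
      fun v hv => (mem_pre hxy).2 (h _ (Sym2.mem_map.2 ⟨v, hv, rfl⟩))⟩

end Main

/-- If `e` is a non-loop edge of `G`, then `U_G(q) - U_{G∖e}(q) = U_{G/e}(q)`. -/
theorem statement7 {V E : Type} [Fintype V] [DecidableEq V] [Fintype E]
    (ends : E → Sym2 V) (e : E) (x y : V) (hxy : x ≠ y) (he : ends e = s(x, y))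
    (q : ℚ) (hq : q ≠ 1) :
    Ugraph ends q - Ugraph (fun e' : {f : E // f ≠ e} => ends e'.1) q =
      Ugraph (fun e' : {f : E // f ≠ e} =>
        (ends e'.1).map fun v =>
          if h : v = y then (⟨x, hxy⟩ : {v : V // v ≠ y}) else ⟨v, h⟩) q := by
  classical
  have hmap : (fun e' : {f : E // f ≠ e} =>
      (ends e'.1).map fun v => if h : v = y then (⟨x, hxy⟩ : {v : V // v ≠ y}) else ⟨v, h⟩) =
      (fun e' : {f : E // f ≠ e} => (ends e'.1).map (cmap hxy)) := rfl
  rw [hmap]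
  have hq1 : q - 1 ≠ 0 := sub_ne_zero.2 hq
  have hcard2 : 2 ≤ Fintype.card V := Fintype.one_lt_card_iff_nontrivial.2 ⟨⟨x, y, hxy⟩⟩
  have hcard' : Fintype.card {v : V // v ≠ y} = Fintype.card V - 1 := by
    have h1 := Fintype.card_subtype_compl (fun v : V => v = y)
    simpa [Fintype.card_subtype_eq] using h1
  -- Step A : the right-hand sum equals the sum over partitions with x ∼ y
  have hsum : (∑ π' : SetPart {v : V // v ≠ y},
      q ^ (iE (fun e' : {f : E // f ≠ e} => (ends e'.1).map (cmap hxy)) π') *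
        (mob π' (onePart {v : V // v ≠ y}) : ℚ)) =
      ∑ π ∈ Finset.univ.filter (fun π : SetPart V => SB (x := x) (y := y) π),
        q ^ (iE (fun e' : {f : E // f ≠ e} => ends e'.1) π) * (mob π (onePart V) : ℚ) := by
    apply Finset.sum_bij (fun π' _ => expand hxy π')
    · intro π' _
      rw [Finset.mem_filter]
      exact ⟨Finset.mem_univ _, SB_expand hxy π'⟩
    · intro a _ b _ h
      exact expand_inj hxy h
    · intro π hπ
      rw [Finset.mem_filter] at hπ
      exact ⟨collapseP hxy π hπ.2, Finset.mem_univ _, expand_collapse hxy π hπ.2⟩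
    · intro π' _
      rw [iE_contract hxy ends e π', mob_expand hxy π']
  -- Step B : the difference of the two left sums
  have hdiff : (∑ π : SetPart V, q ^ (iE ends π) * (mob π (onePart V) : ℚ)) -
      (∑ π : SetPart V,
        q ^ (iE (fun e' : {f : E // f ≠ e} => ends e'.1) π) * (mob π (onePart V) : ℚ)) =
      (q - 1) * ∑ π ∈ Finset.univ.filter (fun π : SetPart V => SB (x := x) (y := y) π),
        q ^ (iE (fun e' : {f : E // f ≠ e} => ends e'.1) π) * (mob π (onePart V) : ℚ) := by
    rw [← Finset.sum_sub_distrib, Finset.mul_sum]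
    rw [← Finset.sum_filter_add_sum_filter_not Finset.univ
      (fun π : SetPart V => SB (x := x) (y := y) π)
      (fun π => q ^ (iE ends π) * (mob π (onePart V) : ℚ) -
        q ^ (iE (fun e' : {f : E // f ≠ e} => ends e'.1) π) * (mob π (onePart V) : ℚ))]
    have hz : ∑ π ∈ Finset.univ.filter (fun π : SetPart V => ¬ SB (x := x) (y := y) π),
        (q ^ (iE ends π) * (mob π (onePart V) : ℚ) -
          q ^ (iE (fun e' : {f : E // f ≠ e} => ends e'.1) π) * (mob π (onePart V) : ℚ)) = 0 := by
      apply Finset.sum_eq_zero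
      intro π hπ
      rw [Finset.mem_filter] at hπ
      rw [iE_split ends e he π, if_neg hπ.2]
      ring_nf
    rw [hz, add_zero]
    apply Finset.sum_congr rfl
    intro π hπ
    rw [Finset.mem_filter] at hπ
    rw [iE_split ends e he π, if_pos hπ.2, pow_succ]
    ring
  -- assemble
  unfold Ugraph
  rw [hsum, ← mul_sub, hdiff, hcard']
  have hpow : (q - 1) ^ (Fintype.card V - 1) =
      (q - 1) ^ (Fintype.card V - 1 - 1) * (q - 1) := by
    rw [← pow_succ]
    congr 1
    omega
  rw [hpow, mul_inv]
  field_simp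


end
end

section
/- A matching σ of {1,...,2n} is connected (no proper interval of {1,...,2n} is a union of arches of σ) if and only if its crossing graph G(σ) is connected. -/
open Finset

noncomputable section
open scoped Classical

private lemma reach_ind {V : Type} {G : SimpleGraph V} {P : V → Prop} {a : V} (ha : P a)
    (h : ∀ u v, P u → G.Adj u v → P v) : ∀ b, G.Reachable a b → P b := by
  intro b hr
  rw [SimpleGraph.reachable_iff_reflTransGen] at hr
  induction hr with
  | refl => exact ha
  | tail _ h2 ih => exact h _ _ ih h2

private lemma noCross_sep {α : Type} [LinearOrder α] {e f : Finset α} {x y : α}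
    (he : ∀ p ∈ e, x < p ∧ p < y) (hf : ∀ q ∈ f, q < x ∨ y < q) :
    ¬ Crosses e f ∧ ¬ Crosses f e := by
  constructor
  · rintro ⟨i, hi, j, hj, k, hk, l, hl, h1, h2, h3⟩
    rcases hf k hk with h | h
    · exact absurd (lt_trans (he i hi).1 h1) (not_lt.2 h.le)
    · exact absurd (lt_trans h2 (he j hj).2) (not_lt.2 h.le)
  · rintro ⟨i, hi, j, hj, k, hk, l, hl, h1, h2, h3⟩
    rcases hf j hj with h | h
    · exact absurd (lt_trans (he k hk).1 h2) (not_lt.2 h.le)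
    · exact absurd (lt_trans h3 (he l hl).2) (not_lt.2 h.le)

private lemma pair_rep {α : Type} [LinearOrder α] {b : Finset α} (hb : b.card = 2) :
    ∃ x y, x < y ∧ b = {x, y} := by
  obtain ⟨x, y, hxy, rfl⟩ := Finset.card_eq_two.1 hb
  rcases lt_or_gt_of_ne hxy with h | h
  · exact ⟨x, y, h, rfl⟩
  · exact ⟨y, x, h, Finset.pair_comm x y⟩

/-- A matching is connected iff its crossing graph is connected. -/
theorem statement9 (n : ℕ) (hn : 1 ≤ n) (σ : SetPart (Fin (2 * n)))
    (hσ : IsMatching σ) : IsConnectedP σ ↔ (crossGraph σ).Connected := by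
  have h2n : 0 < 2 * n := by omega
  constructor
  · -- connected partition → connected crossing graph
    intro hcp
    obtain ⟨b0, hb0, h0b0⟩ := σ.exists_mem (Finset.mem_univ (⟨0, h2n⟩ : Fin (2 * n)))
    rw [SimpleGraph.connected_iff]
    refine ⟨?_, ⟨⟨b0, hb0⟩⟩⟩
    set G := crossGraph σ with hG
    suffices hall : ∀ v : {b // b ∈ σ.parts}, G.Reachable ⟨b0, hb0⟩ v by
      intro u v; exact (hall u).symm.trans (hall v)
    by_contra hco
    push_neg at hco
    obtain ⟨d, hd⟩ := hco
    -- T : support of the component of d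
    set T : Finset (Fin (2 * n)) :=
      Finset.univ.filter (fun x => ∃ e : {b // b ∈ σ.parts}, G.Reachable d e ∧ x ∈ e.1) with hT
    have memT : ∀ x : Fin (2 * n),
        x ∈ T ↔ ∃ e : {b // b ∈ σ.parts}, G.Reachable d e ∧ x ∈ e.1 := by
      intro x; simp [hT]
    have hsubT : ∀ e : {b // b ∈ σ.parts}, G.Reachable d e → e.1 ⊆ T := by
      intro e hre p hp; exact (memT p).2 ⟨e, hre, hp⟩
    have hmemTb : ∀ (x : Fin (2 * n)) (c : Finset (Fin (2 * n))) (hc : c ∈ σ.parts),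
        x ∈ T → x ∈ c → G.Reachable d ⟨c, hc⟩ := by
      intro x c hc hxT hxc
      obtain ⟨e, hre, hxe⟩ := (memT x).1 hxT
      have hce : c = e.1 := σ.eq_of_mem_parts hc e.2 hxc hxe
      have : (⟨c, hc⟩ : {b // b ∈ σ.parts}) = e := Subtype.ext hce
      rw [this]; exact hre
    have hTne : T.Nonempty := by
      have hcard := hσ d.1 d.2
      obtain ⟨p, hp⟩ := Finset.card_pos.1 (by rw [hcard]; norm_num)
      exact ⟨p, (memT p).2 ⟨d, SimpleGraph.Reachable.refl d, hp⟩⟩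
    set amin := T.min' hTne with hamin
    set bmax := T.max' hTne with hbmax
    set I : Finset (Fin (2 * n)) := Finset.Icc amin bmax with hI
    have hTI : T ⊆ I := by
      intro t ht; rw [hI, Finset.mem_Icc]
      exact ⟨T.min'_le t ht, T.le_max' t ht⟩
    have h0T : (⟨0, h2n⟩ : Fin (2 * n)) ∉ T := by
      intro h0
      exact hd ((hmemTb _ b0 hb0 h0 h0b0).symm)
    have h0I : (⟨0, h2n⟩ : Fin (2 * n)) ∉ I := by
      intro h0
      have h1 : amin ≤ (⟨0, h2n⟩ : Fin (2 * n)) := (Finset.mem_Icc.1 h0).1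
      have h2 : (⟨0, h2n⟩ : Fin (2 * n)) ≤ amin := by
        simp [Fin.le_def]
      have : amin = (⟨0, h2n⟩ : Fin (2 * n)) := le_antisymm h1 h2
      exact h0T (this ▸ T.min'_mem hTne)
    have hIne : I.Nonempty := ⟨amin, Finset.mem_Icc.2 ⟨le_refl _, T.min'_le _ (T.max'_mem hTne)⟩⟩
    have hIuniv : I ≠ Finset.univ := fun h => h0I (h ▸ Finset.mem_univ _)
    have hIint : IsInterval I := by
      intro p hp q hq c hc1 hc2
      rw [hI, Finset.mem_Icc] at *
      exact ⟨le_trans hp.1 hc1, le_trans hc2 hq.2⟩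
    refine hcp I hIne hIuniv hIint ?_
    intro blk hblk
    by_cases hreach : G.Reachable d ⟨blk, hblk⟩
    · exact Or.inl (fun p hp => hTI (hsubT _ hreach hp))
    · obtain ⟨x, y, hxy, hblkeq⟩ := pair_rep (hσ blk hblk)
      have hxblk : x ∈ blk := by rw [hblkeq]; simp
      have hyblk : y ∈ blk := by rw [hblkeq]; simp
      have hxT : x ∉ T := fun h => hreach (hmemTb x blk hblk h hxblk)
      have hyT : y ∉ T := fun h => hreach (hmemTb y blk hblk h hyblk)
      -- key lemma: with a point of T strictly inside (x,y) and one strictly outside,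
      -- some block of the component of d crosses blk, contradiction
      have key : ∀ s s' : Fin (2 * n), s ∈ T → s' ∈ T → x < s → s < y →
          (s' < x ∨ y < s') → False := by
        intro s s' hsT hs'T hxs hsy hs'
        have hnc : ∀ e : {b // b ∈ σ.parts}, G.Reachable d e →
            ¬ Crosses blk e.1 ∧ ¬ Crosses e.1 blk := by
          intro e hre
          have hne : e ≠ ⟨blk, hblk⟩ := by
            intro h
            exact hxT (hsubT e hre (h ▸ hxblk))
          constructor
          · intro hc
            exact hreach (hre.trans (SimpleGraph.Adj.reachable ⟨hne, Or.inr hc⟩))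
          · intro hc
            exact hreach (hre.trans (SimpleGraph.Adj.reachable ⟨hne, Or.inl hc⟩))
        have hdich : ∀ e : {b // b ∈ σ.parts}, G.Reachable d e →
            (∀ p ∈ e.1, x < p ∧ p < y) ∨ (∀ p ∈ e.1, p < x ∨ y < p) := by
          intro e hre
          obtain ⟨u, v, huv, hev⟩ := pair_rep (hσ e.1 e.2)
          have hu : u ∈ e.1 := by rw [hev]; simp
          have hv : v ∈ e.1 := by rw [hev]; simp
          have hux : u ≠ x := fun h => hxT (h ▸ hsubT e hre hu)
          have huy : u ≠ y := fun h => hyT (h ▸ hsubT e hre hu)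
          have hvx : v ≠ x := fun h => hxT (h ▸ hsubT e hre hv)
          have hvy : v ≠ y := fun h => hyT (h ▸ hsubT e hre hv)
          obtain ⟨hn1, hn2⟩ := hnc e hre
          have Hu : (x < u ∧ u < y) ∨ (u < x ∨ y < u) := by
            rcases lt_trichotomy u x with h | h | h
            · exact Or.inr (Or.inl h)
            · exact absurd h hux
            · rcases lt_trichotomy u y with h' | h' | h'
              · exact Or.inl ⟨h, h'⟩
              · exact absurd h' huy
              · exact Or.inr (Or.inr h')
          have Hv : (x < v ∧ v < y) ∨ (v < x ∨ y < v) := by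
            rcases lt_trichotomy v x with h | h | h
            · exact Or.inr (Or.inl h)
            · exact absurd h hvx
            · rcases lt_trichotomy v y with h' | h' | h'
              · exact Or.inl ⟨h, h'⟩
              · exact absurd h' hvy
              · exact Or.inr (Or.inr h')
          rcases Hu with Hu | Hu
          · rcases Hv with Hv | Hv
            · refine Or.inl ?_
              intro p hp
              rw [hev] at hp
              simp only [Finset.mem_insert, Finset.mem_singleton] at hp
              rcases hp with rfl | rfl
              · exact Hu
              · exact Hv
            · exfalso
              rcases Hv with Hv | Hv
              · exact absurd (lt_trans Hu.1 huv) (not_lt.2 Hv.le)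
              · exact hn1 ⟨x, hxblk, y, hyblk, u, hu, v, hv, Hu.1, Hu.2, Hv⟩
          · rcases Hv with Hv | Hv
            · exfalso
              rcases Hu with Hu | Hu
              · exact hn2 ⟨u, hu, v, hv, x, hxblk, y, hyblk, Hu, Hv.1, Hv.2⟩
              · exact absurd (lt_trans Hu huv) (not_lt.2 Hv.2.le)
            · refine Or.inr ?_
              intro p hp
              rw [hev] at hp
              simp only [Finset.mem_insert, Finset.mem_singleton] at hp
              rcases hp with rfl | rfl
              · exact Hu
              · exact Hv
        obtain ⟨es, hres, hses⟩ := (memT s).1 hsT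
        obtain ⟨es', hres', hs'es'⟩ := (memT s').1 hs'T
        have hQes : G.Reachable d es ∧ ∀ p ∈ es.1, x < p ∧ p < y := by
          refine ⟨hres, ?_⟩
          rcases hdich es hres with h | h
          · exact h
          · exfalso
            rcases h s hses with h' | h'
            · exact absurd hxs (not_lt.2 h'.le)
            · exact absurd hsy (not_lt.2 h'.le)
        have hstep : ∀ u v : {b // b ∈ σ.parts},
            (G.Reachable d u ∧ ∀ p ∈ u.1, x < p ∧ p < y) → G.Adj u v →
            (G.Reachable d v ∧ ∀ p ∈ v.1, x < p ∧ p < y) := by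
          intro u v hu hadj
          have hrv : G.Reachable d v := hu.1.trans hadj.reachable
          refine ⟨hrv, ?_⟩
          rcases hdich v hrv with h | h
          · exact h
          · exfalso
            obtain ⟨hc1, hc2⟩ := noCross_sep hu.2 h
            rcases hadj.2 with hc | hc
            · exact hc1 hc
            · exact hc2 hc
        have hfin := reach_ind
          (P := fun e : {b // b ∈ σ.parts} => G.Reachable d e ∧ ∀ p ∈ e.1, x < p ∧ p < y)
          hQes hstep es' (hres.symm.trans hres')
        rcases hs' with h | h
        · exact absurd (hfin.2 s' hs'es').1 (not_lt.2 h.le)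
        · exact absurd (hfin.2 s' hs'es').2 (not_lt.2 h.le)
      -- now decide how blk sits relative to I
      by_cases hxI : x ∈ I
      · by_cases hyI : y ∈ I
        · refine Or.inl ?_
          intro p hp
          rw [hblkeq] at hp
          simp only [Finset.mem_insert, Finset.mem_singleton] at hp
          rcases hp with rfl | rfl
          · exact hxI
          · exact hyI
        · exfalso
          rw [hI, Finset.mem_Icc] at hxI hyI
          push_neg at hyI
          have hxb : x < bmax := lt_of_le_of_ne hxI.2 (fun h => hxT (h ▸ T.max'_mem hTne))
          have hyb : bmax < y := hyI (le_trans hxI.1 (le_of_lt hxy))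
          have hax : amin < x := lt_of_le_of_ne hxI.1 (fun h => hxT (h ▸ T.min'_mem hTne))
          exact key bmax amin (T.max'_mem hTne) (T.min'_mem hTne) hxb hyb (Or.inl hax)
      · by_cases hyI : y ∈ I
        · exfalso
          rw [hI, Finset.mem_Icc] at hxI hyI
          push_neg at hxI
          have hxa : x < amin := by
            rcases lt_or_ge x amin with h | h
            · exact h
            · exact absurd (hxI h) (not_lt.2 (le_trans hxy.le hyI.2))
          have hay : amin < y := lt_of_le_of_ne hyI.1
            (fun h => hyT (h ▸ T.min'_mem hTne))
          have hyb : y < bmax ∨ y = bmax := lt_or_eq_of_le hyI.2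
          rcases hyb with h | h
          · exact key amin bmax (T.min'_mem hTne) (T.max'_mem hTne) hxa hay (Or.inr h)
          · exact hyT (h ▸ T.max'_mem hTne)
        · refine Or.inr ?_
          rw [Finset.disjoint_left]
          intro p hp
          rw [hblkeq] at hp
          simp only [Finset.mem_insert, Finset.mem_singleton] at hp
          rcases hp with rfl | rfl
          · exact hxI
          · exact hyI
  · -- connected crossing graph → connected partition
    intro hg I hIne hIuniv hint hall
    obtain ⟨x, hx⟩ := hIne
    obtain ⟨z, hz⟩ : ∃ z, z ∉ I := by
      by_contra h; push_neg at h; exact hIuniv (Finset.eq_univ_iff_forall.2 h)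
    obtain ⟨bx, hbx, hxbx⟩ := σ.exists_mem (Finset.mem_univ x)
    obtain ⟨bz, hbz, hzbz⟩ := σ.exists_mem (Finset.mem_univ z)
    have hr := hg.preconnected ⟨bx, hbx⟩ ⟨bz, hbz⟩
    have hbase : bx ⊆ I := by
      rcases hall bx hbx with h | h
      · exact h
      · exact absurd hx (Finset.disjoint_left.1 h hxbx)
    have key : ∀ v : {b // b ∈ σ.parts},
        (crossGraph σ).Reachable ⟨bx, hbx⟩ v → v.1 ⊆ I := by
      refine reach_ind hbase ?_
      intro u v hu hadj
      rcases hall v.1 v.2 with h | h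
      · exact h
      · exfalso
        rcases hadj.2 with hc | hc
        · obtain ⟨i, hi, j, hj, k, hk, l, hl, h1, h2, h3⟩ := hc
          exact Finset.disjoint_left.1 h hk (hint i (hu hi) j (hu hj) k h1.le h2.le)
        · obtain ⟨i, hi, j, hj, k, hk, l, hl, h1, h2, h3⟩ := hc
          exact Finset.disjoint_left.1 h hj (hint k (hu hk) l (hu hl) j h2.le h3.le)
    exact hz (key ⟨bz, hbz⟩ hr hzbz)

end
end

section
/- If G is a finite connected graph rooted at r, then T_G(1,2) equals the number of orientations of G (not necessarily acyclic) such that every vertex is reachable from r by a directed path. -/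
open Finset

noncomputable section
open scoped Classical

namespace Gioan
noncomputable section
open scoped Classical
open Relation

variable {V : Type}

def substV (u v x : V) : V := if x = u then v else x
@[simp] lemma substV_left (u v : V) : substV u v u = v := if_pos rfl
@[simp] lemma substV_right (u v : V) : substV u v v = v := by
  unfold substV; split <;> simp_all
lemma substV_fiber {u v x y : V} (h : substV u v x = substV u v y) :
    x = y ∨ ((x = u ∨ x = v) ∧ (y = u ∨ y = v)) := by
  unfold substV at h
  by_cases hx : x = u <;> by_cases hy : y = u <;> simp [hx, hy] at h ⊢ <;> tauto

def dRel {E : Type} (ends : E → V × V) (o : E → Bool) : V → V → Prop :=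
  fun a b => ∃ e, (o e = true ∧ ends e = (a, b)) ∨ (o e = false ∧ ends e = (b, a))
def sRel {E : Type} (ends : E → V × V) (o : E → Bool) : V → V → Prop :=
  fun a b => ∃ e, o e = true ∧ (ends e = (a, b) ∨ ends e = (b, a))
def GoodR (D : V → V → Prop) (r : V) (S : Set V) : Prop :=
  ∀ v ∈ S, Relation.ReflTransGen D r v

lemma reach_proj {D Dc : V → V → Prop} (f : V → V)
    (h : ∀ a b, D a b → ReflTransGen Dc (f a) (f b)) {x y}
    (hxy : ReflTransGen D x y) : ReflTransGen Dc (f x) (f y) := by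
  induction hxy with
  | refl => exact .refl
  | tail _ hbc ih => exact ih.trans (h _ _ hbc)
lemma reach_closed {D : V → V → Prop} {P : V → Prop} {r : V} (hr : P r)
    (hcl : ∀ a b, D a b → P a → P b) {x} (hx : ReflTransGen D r x) : P x := by
  induction hx with
  | refl => exact hr
  | tail _ hbc ih => exact hcl _ _ hbc ih
lemma reach_lift {Dc : V → V → Prop} {P : V → Prop} {f : V → V} {r : V}
    (hr : P r) (hfib : ∀ x y, P y → f x = f y → P x)
    (hstep : ∀ a b, Dc a b → (∀ x, f x = a → P x) → ∀ y, f y = b → P y)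
    {z} (hz : ReflTransGen Dc (f r) z) : ∀ x, f x = z → P x := by
  induction hz with
  | refl => exact fun x hx => hfib x r hr hx
  | tail _ hbc ih => exact hstep _ _ hbc ih

section DelCon
variable {E : Type} (ends : E → V × V) (e₀ : E)

def oext (o' : {e : E // e ≠ e₀} → Bool) (b : Bool) : E → Bool :=
  fun e => if h : e = e₀ then b else o' ⟨e, h⟩

@[simp] lemma oext_at (o' : {e : E // e ≠ e₀} → Bool) (b : Bool) : oext e₀ o' b e₀ = b :=
  dif_pos rfl
@[simp] lemma oext_ne (o' : {e : E // e ≠ e₀} → Bool) (b : Bool) (e : {e : E // e ≠ e₀}) :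
    oext e₀ o' b e.1 = o' e := by
  rw [oext, dif_neg e.2]

def endsD : {e : E // e ≠ e₀} → V × V := fun e => ends e.1

def sb : V → V := substV (ends e₀).1 (ends e₀).2

def endsC : {e : E // e ≠ e₀} → V × V :=
  fun e => (sb ends e₀ (ends e.1).1, sb ends e₀ (ends e.1).2)

@[simp] lemma sb_fst : sb ends e₀ (ends e₀).1 = (ends e₀).2 := substV_left _ _
@[simp] lemma sb_snd : sb ends e₀ (ends e₀).2 = (ends e₀).2 := substV_right _ _

variable {ends e₀}
variable {o' : {e : E // e ≠ e₀} → Bool} {r : V} {S : Set V}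

lemma dRel_of_del {b : Bool} {a c : V} (h : dRel (endsD ends e₀) o' a c) :
    dRel ends (oext e₀ o' b) a c := by
  obtain ⟨e, he⟩ := h
  exact ⟨e.1, by simpa [endsD] using he⟩

lemma sRel_of_del {b : Bool} {a c : V} (h : sRel (endsD ends e₀) o' a c) :
    sRel ends (oext e₀ o' b) a c := by
  obtain ⟨e, he⟩ := h
  exact ⟨e.1, by simpa [endsD] using he⟩

lemma dRel_true_iff {a c : V} :
    dRel ends (oext e₀ o' true) a c ↔ dRel (endsD ends e₀) o' a c ∨ ends e₀ = (a, c) := by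
  constructor
  · rintro ⟨e, he⟩
    by_cases h : e = e₀
    · subst h
      simp only [oext_at] at he
      rcases he with ⟨_, h2⟩ | ⟨h1, _⟩
      · exact Or.inr h2
      · exact absurd h1 (by simp)
    · exact Or.inl ⟨⟨e, h⟩, by simpa [endsD, oext, h] using he⟩
  · rintro (h | h)
    · exact dRel_of_del h
    · exact ⟨e₀, Or.inl ⟨oext_at _ _ _, h⟩⟩

lemma dRel_false_iff {a c : V} :
    dRel ends (oext e₀ o' false) a c ↔ dRel (endsD ends e₀) o' a c ∨ ends e₀ = (c, a) := by
  constructor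
  · rintro ⟨e, he⟩
    by_cases h : e = e₀
    · subst h
      simp only [oext_at] at he
      rcases he with ⟨h1, _⟩ | ⟨_, h2⟩
      · exact absurd h1 (by simp)
      · exact Or.inr h2
    · exact Or.inl ⟨⟨e, h⟩, by simpa [endsD, oext, h] using he⟩
  · rintro (h | h)
    · exact dRel_of_del h
    · exact ⟨e₀, Or.inr ⟨oext_at _ _ _, h⟩⟩

lemma sRel_true_iff {a c : V} :
    sRel ends (oext e₀ o' true) a c ↔
      sRel (endsD ends e₀) o' a c ∨ ends e₀ = (a, c) ∨ ends e₀ = (c, a) := by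
  constructor
  · rintro ⟨e, he⟩
    by_cases h : e = e₀
    · subst h
      exact Or.inr he.2
    · exact Or.inl ⟨⟨e, h⟩, by simpa [endsD, oext, h] using he⟩
  · rintro (h | h)
    · exact sRel_of_del h
    · exact ⟨e₀, oext_at _ _ _, h⟩

lemma sRel_false_iff {a c : V} :
    sRel ends (oext e₀ o' false) a c ↔ sRel (endsD ends e₀) o' a c := by
  constructor
  · rintro ⟨e, he⟩
    by_cases h : e = e₀
    · subst h
      simp only [oext_at] at he
      exact absurd he.1 (by simp)
    · exact ⟨⟨e, h⟩, by simpa [endsD, oext, h] using he⟩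
  · exact sRel_of_del

lemma dRel_con_of_del {a c : V} (h : dRel (endsD ends e₀) o' a c) :
    dRel (endsC ends e₀) o' (sb ends e₀ a) (sb ends e₀ c) := by
  obtain ⟨e, he⟩ := h
  rcases he with ⟨h1, h2⟩ | ⟨h1, h2⟩
  · exact ⟨e, Or.inl ⟨h1, by simp [endsC, show ends e.1 = (a, c) from h2]⟩⟩
  · exact ⟨e, Or.inr ⟨h1, by simp [endsC, show ends e.1 = (c, a) from h2]⟩⟩

lemma sRel_con_of_del {a c : V} (h : sRel (endsD ends e₀) o' a c) :
    sRel (endsC ends e₀) o' (sb ends e₀ a) (sb ends e₀ c) := by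
  obtain ⟨e, h1, h2⟩ := h
  rcases h2 with h2 | h2
  · exact ⟨e, h1, Or.inl (by simp [endsC, show ends e.1 = (a, c) from h2])⟩
  · exact ⟨e, h1, Or.inr (by simp [endsC, show ends e.1 = (c, a) from h2])⟩

lemma dRel_con_shape {a c : V} (h : dRel (endsC ends e₀) o' a c) :
    ∃ p q, sb ends e₀ p = a ∧ sb ends e₀ q = c ∧ dRel (endsD ends e₀) o' p q := by
  obtain ⟨e, he⟩ := h
  rcases he with ⟨h1, h2⟩ | ⟨h1, h2⟩
  · refine ⟨(ends e.1).1, (ends e.1).2, ?_, ?_, ⟨e, Or.inl ⟨h1, rfl⟩⟩⟩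
    · exact (congrArg Prod.fst h2 : _)
    · exact (congrArg Prod.snd h2 : _)
  · refine ⟨(ends e.1).2, (ends e.1).1, ?_, ?_, ⟨e, Or.inr ⟨h1, rfl⟩⟩⟩
    · exact (congrArg Prod.snd h2 : _)
    · exact (congrArg Prod.fst h2 : _)

lemma sRel_con_shape {a c : V} (h : sRel (endsC ends e₀) o' a c) :
    ∃ p q, sb ends e₀ p = a ∧ sb ends e₀ q = c ∧ sRel (endsD ends e₀) o' p q := by
  obtain ⟨e, h1, h2⟩ := h
  rcases h2 with h2 | h2
  · exact ⟨(ends e.1).1, (ends e.1).2, (congrArg Prod.fst h2 : _),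
      (congrArg Prod.snd h2 : _), ⟨e, h1, Or.inl rfl⟩⟩
  · exact ⟨(ends e.1).2, (ends e.1).1, (congrArg Prod.snd h2 : _),
      (congrArg Prod.fst h2 : _), ⟨e, h1, Or.inr rfl⟩⟩

lemma con_lift {D' Dc : V → V → Prop} {P : V → Prop}
    (hPr : P r)
    (hfib2 : ∀ x y, P y → (x = (ends e₀).1 ∨ x = (ends e₀).2) →
      (y = (ends e₀).1 ∨ y = (ends e₀).2) → P x)
    (hshape : ∀ a c, Dc a c → ∃ p q, sb ends e₀ p = a ∧ sb ends e₀ q = c ∧ D' p q)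
    (hcl : ∀ a c, D' a c → P a → P c)
    {z} (hz : ReflTransGen Dc (sb ends e₀ r) z) : ∀ x, sb ends e₀ x = z → P x := by
  have hfib : ∀ x y, P y → sb ends e₀ x = sb ends e₀ y → P x := by
    intro x y hy hxy
    rcases substV_fiber hxy with rfl | ⟨hx, hy'⟩
    · exact hy
    · exact hfib2 x y hy hx hy'
  refine reach_lift hPr hfib (fun a c hac hpre y hy => ?_) hz
  obtain ⟨p, q, hp, hq, hD⟩ := hshape a c hac
  exact hfib y q (hcl p q hD (hpre p hp)) (hy.trans hq.symm)


end DelCon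

section DelCon2
variable {E : Type} {ends : E → V × V} {e₀ : E}
variable {o' : {e : E // e ≠ e₀} → Bool} {r : V} {S : Set V}

-- abbreviations
local notation "Gt'" => GoodR (dRel ends (oext e₀ o' true)) r S
local notation "Gf'" => GoodR (dRel ends (oext e₀ o' false)) r S
local notation "Gdel" => GoodR (dRel (endsD ends e₀) o') r S
local notation "Gcon" => GoodR (dRel (endsC ends e₀) o') (sb ends e₀ r) (sb ends e₀ '' S)

lemma good_ext_of_del {b : Bool} (h : Gdel) : GoodR (dRel ends (oext e₀ o' b)) r S :=
  fun s hs => ReflTransGen.mono (fun _ _ => dRel_of_del) _ _ (h s hs)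

lemma good_con_of_ext {b : Bool} (h : GoodR (dRel ends (oext e₀ o' b)) r S) : Gcon := by
  rintro w ⟨s, hs, rfl⟩
  refine reach_proj (sb ends e₀) (fun a c hac => ?_) (h s hs)
  obtain ⟨e, he⟩ := hac
  by_cases hee : e = e₀
  · rw [hee] at he
    rcases he with ⟨_, h2⟩ | ⟨_, h2⟩
    · have ha : a = (ends e₀).1 := by rw [h2]
      have hc : c = (ends e₀).2 := by rw [h2]
      rw [ha, hc, sb_fst, sb_snd]
    · have ha : a = (ends e₀).2 := by rw [h2]
      have hc : c = (ends e₀).1 := by rw [h2]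
      rw [ha, hc, sb_fst, sb_snd]
  · exact ReflTransGen.single (dRel_con_of_del ⟨⟨e, hee⟩, by simpa [endsD, oext, hee] using he⟩)

lemma good_t_or_f_of_con (h : Gcon) : Gt' ∨ Gf' := by
  by_cases hu : ReflTransGen (dRel (endsD ends e₀) o') r (ends e₀).1
  · left
    intro s hs
    have hu' : ReflTransGen (dRel ends (oext e₀ o' true)) r (ends e₀).1 :=
      ReflTransGen.mono (fun _ _ => dRel_of_del) _ _ hu
    have hv' : ReflTransGen (dRel ends (oext e₀ o' true)) r (ends e₀).2 :=
      hu'.tail (dRel_true_iff.mpr (Or.inr Prod.mk.eta.symm))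
    refine con_lift (P := fun x => ReflTransGen (dRel ends (oext e₀ o' true)) r x)
      ReflTransGen.refl ?_ (fun a c => dRel_con_shape) ?_ (h _ ⟨s, hs, rfl⟩) s rfl
    · rintro x y _ (rfl | rfl) _
      · exact hu'
      · exact hv'
    · exact fun a c hac hx => hx.tail (dRel_of_del hac)
  · by_cases hv : ReflTransGen (dRel (endsD ends e₀) o') r (ends e₀).2
    · right
      intro s hs
      have hv' : ReflTransGen (dRel ends (oext e₀ o' false)) r (ends e₀).2 :=
        ReflTransGen.mono (fun _ _ => dRel_of_del) _ _ hv
      have hu' : ReflTransGen (dRel ends (oext e₀ o' false)) r (ends e₀).1 :=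
        hv'.tail (dRel_false_iff.mpr (Or.inr Prod.mk.eta.symm))
      refine con_lift (P := fun x => ReflTransGen (dRel ends (oext e₀ o' false)) r x)
        ReflTransGen.refl ?_ (fun a c => dRel_con_shape) ?_ (h _ ⟨s, hs, rfl⟩) s rfl
      · rintro x y _ (rfl | rfl) _
        · exact hu'
        · exact hv'
      · exact fun a c hac hx => hx.tail (dRel_of_del hac)
    · left
      have hdel : Gdel := by
        intro s hs
        refine con_lift (P := fun x => ReflTransGen (dRel (endsD ends e₀) o') r x)
          ReflTransGen.refl ?_ (fun a c => dRel_con_shape)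
          (fun a c hac hx => hx.tail hac) (h _ ⟨s, hs, rfl⟩) s rfl
        rintro x y hy _ (rfl | rfl)
        · exact absurd hy hu
        · exact absurd hy hv
      exact good_ext_of_del hdel

lemma not_both (hdel : ¬ Gdel) : ¬ (Gt' ∧ Gf') := by
  rintro ⟨ht, hf⟩
  apply hdel
  by_cases hv : ReflTransGen (dRel (endsD ends e₀) o') r (ends e₀).2
  · intro s hs
    refine reach_closed ReflTransGen.refl (fun a c hac ha => ?_) (ht s hs)
    rcases dRel_true_iff.mp hac with h | h
    · exact ha.tail h
    · have hc : c = (ends e₀).2 := by rw [h]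
      rwa [hc]
  · by_cases hu : ReflTransGen (dRel (endsD ends e₀) o') r (ends e₀).1
    · intro s hs
      refine reach_closed ReflTransGen.refl (fun a c hac ha => ?_) (hf s hs)
      rcases dRel_false_iff.mp hac with h | h
      · exact ha.tail h
      · have hc : c = (ends e₀).1 := by rw [h]
        rwa [hc]
    · intro s hs
      refine reach_closed ReflTransGen.refl (fun a c hac ha => ?_) (ht s hs)
      rcases dRel_true_iff.mp hac with h | h
      · exact ha.tail h
      · have ha' : a = (ends e₀).1 := by rw [h]
        exact absurd (ha' ▸ ha) hu

lemma orient_pointwise :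
    ((if Gt' then 1 else 0) + (if Gf' then 1 else 0) : ℕ) =
      (if Gdel then 1 else 0) + (if Gcon then 1 else 0) := by
  by_cases hdel : Gdel
  · have ht : Gt' := good_ext_of_del hdel
    have hf : Gf' := good_ext_of_del hdel
    have hc : Gcon := good_con_of_ext ht
    simp [hdel, ht, hf, hc]
  · by_cases hcon : Gcon
    · rcases good_t_or_f_of_con hcon with ht | hf
      · have hf : ¬ Gf' := fun hf => not_both hdel ⟨ht, hf⟩
        simp [hdel, hcon, ht, hf]
      · have ht : ¬ Gt' := fun ht => not_both hdel ⟨ht, hf⟩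
        simp [hdel, hcon, ht, hf]
    · have ht : ¬ Gt' := fun h => hcon (good_con_of_ext h)
      have hf : ¬ Gf' := fun h => hcon (good_con_of_ext h)
      simp [hdel, hcon, ht, hf]

local notation "Ht'" => GoodR (sRel ends (oext e₀ o' true)) r S
local notation "Hf'" => GoodR (sRel ends (oext e₀ o' false)) r S
local notation "Hdel" => GoodR (sRel (endsD ends e₀) o') r S
local notation "Hcon" => GoodR (sRel (endsC ends e₀) o') (sb ends e₀ r) (sb ends e₀ '' S)

lemma hf_iff_hdel : Hf' ↔ Hdel := by
  constructor <;> intro h s hs <;> refine ReflTransGen.mono (fun a c hac => ?_) _ _ (h s hs)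
  · exact sRel_false_iff.mp hac
  · exact sRel_false_iff.mpr hac

lemma hcon_of_ht (h : Ht') : Hcon := by
  rintro w ⟨s, hs, rfl⟩
  refine reach_proj (sb ends e₀) (fun a c hac => ?_) (h s hs)
  rcases sRel_true_iff.mp hac with h' | h' | h'
  · exact ReflTransGen.single (sRel_con_of_del h')
  · have ha : a = (ends e₀).1 := by rw [h']
    have hc : c = (ends e₀).2 := by rw [h']
    rw [ha, hc, sb_fst, sb_snd]
  · have ha : a = (ends e₀).2 := by rw [h']
    have hc : c = (ends e₀).1 := by rw [h']
    rw [ha, hc, sb_fst, sb_snd]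

lemma ht_of_hcon (h : Hcon) : Ht' := by
  by_cases huv : ReflTransGen (sRel (endsD ends e₀) o') r (ends e₀).1 ∨
      ReflTransGen (sRel (endsD ends e₀) o') r (ends e₀).2
  · intro s hs
    have key : ReflTransGen (sRel ends (oext e₀ o' true)) r (ends e₀).1 ∧
        ReflTransGen (sRel ends (oext e₀ o' true)) r (ends e₀).2 := by
      rcases huv with hu | hv
      · have hu' := ReflTransGen.mono (fun a c (hac : sRel (endsD ends e₀) o' a c) => sRel_of_del (b := true) hac) _ _ hu
        exact ⟨hu', hu'.tail (sRel_true_iff.mpr (Or.inr (Or.inl Prod.mk.eta.symm)))⟩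
      · have hv' := ReflTransGen.mono (fun a c (hac : sRel (endsD ends e₀) o' a c) => sRel_of_del (b := true) hac) _ _ hv
        exact ⟨hv'.tail (sRel_true_iff.mpr (Or.inr (Or.inr Prod.mk.eta.symm))), hv'⟩
    refine con_lift (P := fun x => ReflTransGen (sRel ends (oext e₀ o' true)) r x)
      ReflTransGen.refl ?_ (fun a c => sRel_con_shape) ?_ (h _ ⟨s, hs, rfl⟩) s rfl
    · rintro x y _ (rfl | rfl) _
      · exact key.1
      · exact key.2
    · exact fun a c hac hx => hx.tail (sRel_of_del hac)
  · push_neg at huv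
    have hdel : Hdel := by
      intro s hs
      refine con_lift (P := fun x => ReflTransGen (sRel (endsD ends e₀) o') r x)
        ReflTransGen.refl ?_ (fun a c => sRel_con_shape)
        (fun a c hac hx => hx.tail hac) (h _ ⟨s, hs, rfl⟩) s rfl
      rintro x y hy _ (rfl | rfl)
      · exact absurd hy huv.1
      · exact absurd hy huv.2
    exact fun s hs => ReflTransGen.mono (fun a c hac => sRel_of_del (b := true) hac) _ _ (hdel s hs)

lemma subset_pointwise :
    ((if Ht' then 1 else 0) + (if Hf' then 1 else 0) : ℕ) =
      (if Hdel then 1 else 0) + (if Hcon then 1 else 0) := by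
  have h1 : Ht' ↔ Hcon := ⟨hcon_of_ht, ht_of_hcon⟩
  have h2 : Hf' ↔ Hdel := hf_iff_hdel
  by_cases ht : Ht' <;> by_cases hf : Hf' <;>
    simp [ht, hf, h1.symm.mp, ← h1, ← h2, hf]

end DelCon2

section Count

lemma natCard_subtype {α : Type} [Fintype α] (p : α → Prop) :
    Nat.card {x // p x} = ∑ x, if p x then 1 else 0 := by
  rw [Nat.card_eq_fintype_card, Fintype.card_subtype, Finset.card_filter]

lemma bool_card (p : Bool → Prop) :
    Nat.card {b // p b} = (if p true then 1 else 0) + (if p false then 1 else 0) := by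
  rw [natCard_subtype, Fintype.sum_bool]

variable {E : Type}

def oextEquiv (e₀ : E) : (E → Bool) ≃ ({e : E // e ≠ e₀} → Bool) × Bool where
  toFun o := (fun e => o e.1, o e₀)
  invFun p := oext e₀ p.1 p.2
  left_inv o := by
    funext e
    by_cases h : e = e₀ <;> simp [oext, h]
  right_inv p := by
    obtain ⟨o', b⟩ := p
    simp only [Prod.mk.injEq]
    exact ⟨funext fun e => oext_ne e₀ o' b e, oext_at e₀ o' b⟩

lemma count_split [Fintype E] (e₀ : E) (P : (E → Bool) → Prop) :
    Nat.card {o // P o} =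
      ∑ o' : ({e : E // e ≠ e₀} → Bool),
        ((if P (oext e₀ o' true) then 1 else 0) +
          (if P (oext e₀ o' false) then 1 else 0)) := by
  have e1 : {o // P o} ≃ {p : ({e : E // e ≠ e₀} → Bool) × Bool // P (oext e₀ p.1 p.2)} :=
    (oextEquiv e₀).subtypeEquiv fun o =>
      iff_of_eq (congrArg P ((oextEquiv e₀).left_inv o)).symm
  have e2 := Equiv.subtypeProdEquivSigmaSubtype (fun (o' : {e : E // e ≠ e₀} → Bool) b =>
    P (oext e₀ o' b))
  rw [Nat.card_congr (e1.trans e2), Nat.card_eq_fintype_card, Fintype.card_sigma]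
  exact Finset.sum_congr rfl fun o' _ => by rw [← Nat.card_eq_fintype_card, bool_card]

lemma orient_split [Fintype E] (ends : E → V × V) (e₀ : E) (r : V) (S : Set V) :
    Nat.card {o : E → Bool // GoodR (dRel ends o) r S} =
      Nat.card {o' : {e : E // e ≠ e₀} → Bool // GoodR (dRel (endsD ends e₀) o') r S} +
      Nat.card {o' : {e : E // e ≠ e₀} → Bool //
        GoodR (dRel (endsC ends e₀) o') (sb ends e₀ r) (sb ends e₀ '' S)} := by
  rw [count_split e₀, natCard_subtype, natCard_subtype, ← Finset.sum_add_distrib]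
  exact Finset.sum_congr rfl fun o' _ => orient_pointwise

lemma subset_split [Fintype E] (ends : E → V × V) (e₀ : E) (r : V) (S : Set V) :
    Nat.card {o : E → Bool // GoodR (sRel ends o) r S} =
      Nat.card {o' : {e : E // e ≠ e₀} → Bool // GoodR (sRel (endsD ends e₀) o') r S} +
      Nat.card {o' : {e : E // e ≠ e₀} → Bool //
        GoodR (sRel (endsC ends e₀) o') (sb ends e₀ r) (sb ends e₀ '' S)} := by
  rw [count_split e₀, natCard_subtype, natCard_subtype, ← Finset.sum_add_distrib]
  exact Finset.sum_congr rfl fun o' _ => subset_pointwise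

lemma key (n : ℕ) : ∀ (E : Type) [Fintype E], Fintype.card E = n →
    ∀ (ends : E → V × V) (r : V) (S : Set V),
    Nat.card {o : E → Bool // GoodR (dRel ends o) r S} =
      Nat.card {o : E → Bool // GoodR (sRel ends o) r S} := by
  induction n with
  | zero =>
    intro E _ hE ends r S
    have hem : IsEmpty E := Fintype.card_eq_zero_iff.mp hE
    have h : ∀ o : E → Bool, dRel ends o = sRel ends o := fun o => by
      funext a c
      apply propext
      constructor <;> rintro ⟨e, -⟩ <;> exact (hem.false e).elim
    simp only [h]
  | succ n ih =>
    intro E _ hE ends r S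
    obtain ⟨e₀⟩ : Nonempty E := Fintype.card_pos_iff.mp (by omega)
    have hcard : Fintype.card {e : E // e ≠ e₀} = n := by
      have h1 : Fintype.card {x : E | x ≠ e₀} = Fintype.card E - 1 := Set.card_ne_eq e₀
      have h2 : Fintype.card {e : E // e ≠ e₀} = Fintype.card {x : E | x ≠ e₀} :=
        Fintype.card_congr (Equiv.setCongr rfl)
      omega
    rw [orient_split ends e₀ r S, subset_split ends e₀ r S,
      ih _ hcard (endsD ends e₀) r S,
      ih _ hcard (endsC ends e₀) (sb ends e₀ r) (sb ends e₀ '' S)]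

end Count

section Graph

lemma toFinset_irrel {α : Type} (s : Set α) (i1 i2 : Fintype s) :
    @Set.toFinset α s i1 = @Set.toFinset α s i2 := by
  cases Subsingleton.elim i1 i2; rfl

variable {V : Type}

def eEnds (G : SimpleGraph V) : G.edgeSet → V × V := fun e => Quot.out e.1

lemma eEnds_mk (G : SimpleGraph V) (e : G.edgeSet) : s((eEnds G e).1, (eEnds G e).2) = e.1 :=
  Quot.out_eq _

lemma eEnds_adj (G : SimpleGraph V) (e : G.edgeSet) : G.Adj (eEnds G e).1 (eEnds G e).2 := by
  have h := e.2
  rw [← eEnds_mk G e, ← Prod.mk.eta (p := eEnds G e)] at h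
  exact (SimpleGraph.mem_edgeSet G).mp h

lemma edge_eq {G : SimpleGraph V} {e : G.edgeSet} {a b : V} (h : eEnds G e = (a, b)) :
    e.1 = s(a, b) := by rw [← eEnds_mk G e, h]

lemma eEnds_cases (G : SimpleGraph V) {z : Sym2 V} (h : z ∈ G.edgeSet) {a b : V}
    (hz : z = s(a, b)) :
    eEnds G ⟨z, h⟩ = (a, b) ∨ eEnds G ⟨z, h⟩ = (b, a) := by
  have h1 : s((eEnds G ⟨z, h⟩).1, (eEnds G ⟨z, h⟩).2) = s(a, b) := by rw [eEnds_mk]; exact hz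
  rcases (Sym2.mk_eq_mk_iff (q := (a, b))).mp h1 with h' | h'
  · exact Or.inl h'
  · exact Or.inr (by simpa using h')

lemma edge_unique {G : SimpleGraph V} {e e' : G.edgeSet} {a b : V}
    (h : eEnds G e = (a, b) ∨ eEnds G e = (b, a))
    (h' : eEnds G e' = (a, b) ∨ eEnds G e' = (b, a)) : e = e' := by
  have key : ∀ (f : G.edgeSet), eEnds G f = (a, b) ∨ eEnds G f = (b, a) → f.1 = s(a, b) := by
    rintro f (hf | hf)
    · exact edge_eq hf
    · rw [edge_eq hf, Sym2.eq_swap]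
  exact Subtype.ext ((key e h).trans (key e' h').symm)

section Orient
variable {G : SimpleGraph V}

lemma isOrientation_dRel (G : SimpleGraph V) (o : G.edgeSet → Bool) :
    IsOrientation G (dRel (eEnds G) o) := by
  constructor
  · rintro a b ⟨e, ⟨_, h2⟩ | ⟨_, h2⟩⟩
    · have := eEnds_adj G e; rwa [h2] at this
    · have := eEnds_adj G e; rw [h2] at this; exact this.symm
  · intro a b hab
    have hx : ¬ (dRel (eEnds G) o a b ∧ dRel (eEnds G) o b a) := by
      rintro ⟨⟨e, he⟩, ⟨e', he'⟩⟩
      have he2 : eEnds G e = (a, b) ∨ eEnds G e = (b, a) := by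
        rcases he with ⟨_, h⟩ | ⟨_, h⟩
        exacts [Or.inl h, Or.inr h]
      have he'2 : eEnds G e' = (a, b) ∨ eEnds G e' = (b, a) := by
        rcases he' with ⟨_, h⟩ | ⟨_, h⟩
        exacts [Or.inr h, Or.inl h]
      cases edge_unique he'2 he2
      rcases he with ⟨h1, h2⟩ | ⟨h1, h2⟩ <;> rcases he' with ⟨h1', h2'⟩ | ⟨h1', h2'⟩ <;>
        first
        | exact Bool.noConfusion (h1.symm.trans h1')
        | exact hab.ne (Prod.ext_iff.mp (h2.symm.trans h2')).1
        | exact hab.ne (Prod.ext_iff.mp (h2.symm.trans h2')).1.symm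
        | exact hab.ne (Prod.ext_iff.mp (h2'.symm.trans h2)).1
        | exact hab.ne (Prod.ext_iff.mp (h2'.symm.trans h2)).1.symm
    have hy : dRel (eEnds G) o a b ∨ dRel (eEnds G) o b a := by
      rcases eEnds_cases G ((SimpleGraph.mem_edgeSet G).mpr hab) rfl with hc | hc
      · cases ho : o ⟨s(a, b), (SimpleGraph.mem_edgeSet G).mpr hab⟩
        · exact Or.inr ⟨_, Or.inr ⟨ho, hc⟩⟩
        · exact Or.inl ⟨_, Or.inl ⟨ho, hc⟩⟩
      · cases ho : o ⟨s(a, b), (SimpleGraph.mem_edgeSet G).mpr hab⟩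
        · exact Or.inl ⟨_, Or.inr ⟨ho, hc⟩⟩
        · exact Or.inr ⟨_, Or.inl ⟨ho, hc⟩⟩
    constructor
    · exact fun h h' => hx ⟨h, h'⟩
    · exact fun h => hy.resolve_right h

lemma dRel_inj (G : SimpleGraph V) {o o' : G.edgeSet → Bool}
    (h : dRel (eEnds G) o = dRel (eEnds G) o') : o = o' := by
  have key : ∀ (p q : G.edgeSet → Bool), dRel (eEnds G) p = dRel (eEnds G) q →
      ∀ e, p e = true → q e = true := by
    intro p q hpq e he
    have hadj := eEnds_adj G e
    have hD : dRel (eEnds G) p (eEnds G e).1 (eEnds G e).2 :=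
      ⟨e, Or.inl ⟨he, Prod.mk.eta.symm⟩⟩
    rw [hpq] at hD
    obtain ⟨e', he'⟩ := hD
    rcases he' with ⟨h1', h2'⟩ | ⟨h1', h2'⟩
    · have hee : e' = e := Subtype.ext (by rw [← eEnds_mk G e', h2', Prod.mk.eta, eEnds_mk])
      rwa [hee] at h1'
    · have hee : e' = e := Subtype.ext (by
        rw [← eEnds_mk G e', h2', ← eEnds_mk G e, ← Prod.mk.eta (p := eEnds G e)]
        exact Sym2.eq_swap)
      rw [hee] at h2'
      exact (hadj.ne (by simpa using congrArg Prod.fst h2')).elim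
  funext e
  cases ho : o e with
  | true => exact (key o o' h e ho).symm
  | false =>
    cases ho' : o' e with
    | true => exact absurd (key o' o h.symm e ho') (by simp [ho])
    | false => rfl

lemma dRel_surj (G : SimpleGraph V) {D : V → V → Prop} (hD : IsOrientation G D) :
    ∃ o : G.edgeSet → Bool, dRel (eEnds G) o = D := by
  refine ⟨fun e => if D (eEnds G e).1 (eEnds G e).2 then true else false, ?_⟩
  funext a b
  apply propext
  constructor
  · rintro ⟨e, ⟨h1, h2⟩ | ⟨h1, h2⟩⟩
    · have h1' : (if D (eEnds G e).1 (eEnds G e).2 then true else false) = true := h1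
      rw [h2] at h1'
      by_cases hd : D a b
      · exact hd
      · simp [hd] at h1'
    · have h1' : (if D (eEnds G e).1 (eEnds G e).2 then true else false) = false := h1
      rw [h2] at h1'
      have hnb : ¬ D b a := by
        intro hd; simp [hd] at h1' 
      have hadj : G.Adj b a := by
        have := eEnds_adj G e; rwa [h2] at this
      exact by_contra fun hnab => hnb ((hD.2 b a hadj).mpr hnab)
  · intro hab
    have hadj := hD.1 a b hab
    have hm : s(a, b) ∈ G.edgeSet := (SimpleGraph.mem_edgeSet G).mpr hadj
    rcases eEnds_cases G hm rfl with hc | hc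
    · refine ⟨⟨s(a, b), hm⟩, Or.inl ⟨?_, hc⟩⟩
      show (if D (eEnds G ⟨s(a, b), hm⟩).1 (eEnds G ⟨s(a, b), hm⟩).2 then true else false) = true
      rw [hc]; simp [hab]
    · refine ⟨⟨s(a, b), hm⟩, Or.inr ⟨?_, hc⟩⟩
      show (if D (eEnds G ⟨s(a, b), hm⟩).1 (eEnds G ⟨s(a, b), hm⟩).2 then true else false) = false
      rw [hc]
      simp [(hD.2 a b hadj).mp hab]

lemma orient_card (G : SimpleGraph V) (r : V) :
    Nat.card {D : V → V → Prop // IsOrientation G D ∧ RootConn D r} =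
      Nat.card {o : G.edgeSet → Bool // GoodR (dRel (eEnds G) o) r Set.univ} := by
  apply Nat.card_congr
  apply Equiv.symm
  refine Equiv.ofBijective
    (fun o => ⟨dRel (eEnds G) o.1, isOrientation_dRel G o.1, fun v => o.2 v trivial⟩)
    ⟨?_, ?_⟩
  · intro o o' h
    exact Subtype.ext (dRel_inj G (congrArg Subtype.val h))
  · rintro ⟨D, hD, hR⟩
    obtain ⟨o, ho⟩ := dRel_surj G hD
    exact ⟨⟨o, fun v _ => by rw [ho]; exact hR v⟩, Subtype.ext ho⟩

end Orient

section Subset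
variable {G : SimpleGraph V} [Fintype ↥G.edgeSet]

def toSub (G : SimpleGraph V) [Fintype ↥G.edgeSet] (o : G.edgeSet → Bool) : Finset (Sym2 V) :=
  (Set.toFinset G.edgeSet).filter fun z => ∃ h : z ∈ G.edgeSet, o ⟨z, h⟩ = true

lemma mem_toSub {o : G.edgeSet → Bool} {z : Sym2 V} :
    z ∈ toSub G o ↔ ∃ h : z ∈ G.edgeSet, o ⟨z, h⟩ = true := by
  rw [toSub, Finset.mem_filter]
  exact ⟨fun h => h.2, fun h => ⟨Set.mem_toFinset.mpr h.1, h⟩⟩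

lemma sRel_adj (o : G.edgeSet → Bool) (a b : V) :
    sRel (eEnds G) o a b ↔
      (SimpleGraph.fromEdgeSet (↑(toSub G o) : Set (Sym2 V))).Adj a b := by
  rw [SimpleGraph.fromEdgeSet_adj]
  constructor
  · rintro ⟨e, h1, h2 | h2⟩
    · have hadj : G.Adj a b := by have := eEnds_adj G e; rwa [h2] at this
      refine ⟨?_, hadj.ne⟩
      rw [Finset.mem_coe, mem_toSub]
      refine ⟨(edge_eq h2) ▸ e.2, ?_⟩
      have hee : (⟨s(a, b), (edge_eq h2) ▸ e.2⟩ : G.edgeSet) = e :=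
        Subtype.ext (edge_eq h2).symm
      rw [hee]; exact h1
    · have hadj : G.Adj a b := by
        have := eEnds_adj G e; rw [h2] at this; exact this.symm
      refine ⟨?_, hadj.ne⟩
      rw [Finset.mem_coe, mem_toSub]
      have hz : e.1 = s(a, b) := by rw [edge_eq h2, Sym2.eq_swap]
      refine ⟨hz ▸ e.2, ?_⟩
      have hee : (⟨s(a, b), hz ▸ e.2⟩ : G.edgeSet) = e := Subtype.ext hz.symm
      rw [hee]; exact h1
  · rintro ⟨hmem, hne⟩
    rw [Finset.mem_coe, mem_toSub] at hmem
    obtain ⟨h1, h2⟩ := hmem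
    exact ⟨⟨s(a, b), h1⟩, h2, eEnds_cases G h1 rfl⟩

lemma good_sub_iff (o : G.edgeSet → Bool) (r : V) :
    GoodR (sRel (eEnds G) o) r Set.univ ↔
      ∀ v, Relation.ReflTransGen
        (SimpleGraph.fromEdgeSet (↑(toSub G o) : Set (Sym2 V))).Adj r v := by
  have h : sRel (eEnds G) o =
      (SimpleGraph.fromEdgeSet (↑(toSub G o) : Set (Sym2 V))).Adj :=
    funext fun a => funext fun b => propext (sRel_adj o a b)
  rw [GoodR, h]
  exact ⟨fun hh v => hh v trivial, fun hh v _ => hh v⟩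

lemma subset_count (G : SimpleGraph V) [Fintype ↥G.edgeSet] (r : V) :
    Nat.card {o : G.edgeSet → Bool // GoodR (sRel (eEnds G) o) r Set.univ} =
      ((Set.toFinset G.edgeSet).powerset.filter
        (fun A : Finset (Sym2 V) => ∀ v, Relation.ReflTransGen
          (SimpleGraph.fromEdgeSet (↑A : Set (Sym2 V))).Adj r v)).card := by
  rw [← Fintype.card_coe, ← Nat.card_eq_fintype_card]
  apply Nat.card_congr
  refine Equiv.ofBijective (fun o => ⟨toSub G o.1, ?_⟩) ⟨?_, ?_⟩
  · rw [Finset.mem_filter, Finset.mem_powerset]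
    exact ⟨Finset.filter_subset _ _, (good_sub_iff o.1 r).mp o.2⟩
  · intro o o' h
    apply Subtype.ext; funext e
    have h' : toSub G o.1 = toSub G o'.1 := congrArg Subtype.val h
    have he : e.1 ∈ toSub G o.1 ↔ e.1 ∈ toSub G o'.1 := by rw [h']
    rw [mem_toSub, mem_toSub] at he
    have h1 : (∃ h : e.1 ∈ G.edgeSet, o.1 ⟨e.1, h⟩ = true) ↔ o.1 e = true :=
      ⟨fun ⟨h, hh⟩ => by
          rwa [show (⟨e.1, h⟩ : G.edgeSet) = e from Subtype.ext rfl] at hh,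
       fun hh => ⟨e.2, by
          rwa [show (⟨e.1, e.2⟩ : G.edgeSet) = e from Subtype.ext rfl]⟩⟩
    have h2 : (∃ h : e.1 ∈ G.edgeSet, o'.1 ⟨e.1, h⟩ = true) ↔ o'.1 e = true :=
      ⟨fun ⟨h, hh⟩ => by
          rwa [show (⟨e.1, h⟩ : G.edgeSet) = e from Subtype.ext rfl] at hh,
       fun hh => ⟨e.2, by
          rwa [show (⟨e.1, e.2⟩ : G.edgeSet) = e from Subtype.ext rfl]⟩⟩
    rw [h1, h2] at he
    cases ho : o.1 e <;> cases ho' : o'.1 e <;> simp_all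
  · rintro ⟨A, hA⟩
    rw [Finset.mem_filter, Finset.mem_powerset] at hA
    have hT : toSub G (fun e => if e.1 ∈ A then true else false) = A := by
      ext z
      rw [mem_toSub]
      constructor
      · rintro ⟨h1, h2⟩
        by_cases hz : z ∈ A
        · exact hz
        · simp [hz] at h2
      · intro hz
        exact ⟨Set.mem_toFinset.mp (hA.1 hz), by simp [hz]⟩
    refine ⟨⟨fun e => if e.1 ∈ A then true else false, ?_⟩, Subtype.ext hT⟩
    rw [good_sub_iff _ r, hT]
    exact hA.2

end Subset

section Tutte
variable [Fintype V]

lemma conn_card_one {H : SimpleGraph V} (r : V)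
    (h : ∀ v, Relation.ReflTransGen H.Adj r v) :
    Nat.card H.ConnectedComponent = 1 := by
  rw [Nat.card_eq_one_iff_unique]
  refine ⟨⟨fun c d => ?_⟩, ⟨H.connectedComponentMk r⟩⟩
  refine SimpleGraph.ConnectedComponent.ind₂ (fun u v => ?_) c d
  exact SimpleGraph.ConnectedComponent.sound
    ((((SimpleGraph.reachable_iff_reflTransGen _ _).mpr (h u))).symm.trans
      (((SimpleGraph.reachable_iff_reflTransGen _ _).mpr (h v))))

lemma card_one_conn {H : SimpleGraph V} (r : V)
    (h : Nat.card H.ConnectedComponent = 1) :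
    ∀ v, Relation.ReflTransGen H.Adj r v := by
  intro v
  haveI := (Nat.card_eq_one_iff_unique.mp h).1
  have he : H.connectedComponentMk r = H.connectedComponentMk v := Subsingleton.elim _ _
  exact (SimpleGraph.reachable_iff_reflTransGen _ _).mp (SimpleGraph.ConnectedComponent.exact he)

lemma comp_pos [Nonempty V] (H : SimpleGraph V) : 0 < Nat.card H.ConnectedComponent := by
  haveI : Finite H.ConnectedComponent := Finite.of_surjective _ (Quot.mk_surjective)
  haveI : Nonempty H.ConnectedComponent := Nonempty.map H.connectedComponentMk ‹_›
  exact Nat.card_pos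

lemma comp_le (H : SimpleGraph V) : Nat.card H.ConnectedComponent ≤ Fintype.card V := by
  rw [← Nat.card_eq_fintype_card]
  exact Nat.card_le_card_of_surjective _ (Quot.mk_surjective)

lemma tutte_eval (G : SimpleGraph V) (hG : G.Connected) (r : V)
    [inst : Fintype ↥G.edgeSet] :
    tutteG G 1 2 = ((((Set.toFinset G.edgeSet).powerset).filter
      (fun A : Finset (Sym2 V) => ∀ v, Relation.ReflTransGen
        (SimpleGraph.fromEdgeSet (↑A : Set (Sym2 V))).Adj r v)).card : ℤ) := by
  haveI : Nonempty V := hG.nonempty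
  have hfin : @Set.toFinset _ G.edgeSet (Fintype.ofFinite _) = Set.toFinset G.edgeSet :=
    toFinset_irrel _ _ _
  show (∑ A ∈ (@Set.toFinset _ G.edgeSet (Fintype.ofFinite _)).powerset,
      ((1 : ℤ) - 1) ^ ((Fintype.card V - Nat.card (SimpleGraph.fromEdgeSet
          (↑(@Set.toFinset _ G.edgeSet (Fintype.ofFinite _)) : Set (Sym2 V))).ConnectedComponent)
        - (Fintype.card V -
            Nat.card (SimpleGraph.fromEdgeSet (↑A : Set (Sym2 V))).ConnectedComponent)) *
      ((2 : ℤ) - 1) ^ (A.card - (Fintype.card V -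
          Nat.card (SimpleGraph.fromEdgeSet (↑A : Set (Sym2 V))).ConnectedComponent))) = _
  rw [hfin]
  have htop : Nat.card (SimpleGraph.fromEdgeSet
      (↑(Set.toFinset G.edgeSet) : Set (Sym2 V))).ConnectedComponent = 1 := by
    rw [Set.coe_toFinset, SimpleGraph.fromEdgeSet_edgeSet]
    exact conn_card_one r fun v =>
      (SimpleGraph.reachable_iff_reflTransGen _ _).mp (hG.preconnected r v)
  rw [Finset.sum_congr rfl (fun A hA => ?_)]
  · rw [Finset.sum_boole (p := fun A : Finset (Sym2 V) => ∀ v, Relation.ReflTransGen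
        (SimpleGraph.fromEdgeSet (↑A : Set (Sym2 V))).Adj r v)]
  · rw [htop]
    have hc1 : 0 < Nat.card (SimpleGraph.fromEdgeSet
        (↑A : Set (Sym2 V))).ConnectedComponent := comp_pos _
    have hc2 : Nat.card (SimpleGraph.fromEdgeSet
        (↑A : Set (Sym2 V))).ConnectedComponent ≤ Fintype.card V := comp_le _
    have hV : 0 < Fintype.card V := Fintype.card_pos
    have hiff : ((Fintype.card V - 1) - (Fintype.card V -
        Nat.card (SimpleGraph.fromEdgeSet (↑A : Set (Sym2 V))).ConnectedComponent) = 0) ↔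
        (∀ v, Relation.ReflTransGen
          (SimpleGraph.fromEdgeSet (↑A : Set (Sym2 V))).Adj r v) := by
      constructor
      · intro h
        exact card_one_conn r (by omega)
      · intro h
        have := conn_card_one r h
        omega
    rw [show ((2 : ℤ) - 1) = 1 from by norm_num, one_pow, mul_one,
      show ((1 : ℤ) - 1) = 0 from by norm_num, zero_pow_eq,
      if_congr hiff rfl rfl]

end Tutte
end Graph

theorem main {V : Type} [Fintype V] (G : SimpleGraph V) (hG : G.Connected) (r : V) :
    (Nat.card {D : V → V → Prop // IsOrientation G D ∧ RootConn D r} : ℤ) =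
      tutteG G 1 2 := by
  classical
  letI inst : Fintype ↥G.edgeSet := Fintype.ofFinite _
  rw [tutte_eval G hG r, orient_card G r,
    key (Fintype.card ↥G.edgeSet) ↥G.edgeSet rfl (eEnds G) r Set.univ,
    subset_count G r]
  congr!
end
end Gioan


/-- Gioan: for a connected graph rooted at `r`, `T_G(1,2)` counts the orientations
in which every vertex is reachable from `r` by a directed path. -/
theorem statement12 {V : Type} [Fintype V] (G : SimpleGraph V) (hG : G.Connected)
    (r : V) :
    (Nat.card {D : V → V → Prop // IsOrientation G D ∧ RootConn D r} : ℤ) =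
      tutteG G 1 2 := Gioan.main G hG r

end
end

section
/- Lassalle's sequence a_n, defined by -log(Σ_{n≥0} (-1)^n C_n z^{2n}/(2n)!) = Σ_{n≥1} a_n z^{2n}/(2n)!, is weakly increasing: a_n ≤ a_{n+1} for all n ≥ 1. -/
open Finset

noncomputable section
open scoped Classical

section
open PowerSeries


def S : ℕ → ℚ
  | 0 => 0
  | 1 => 1/2
  | n+2 => (∑ k ∈ (Finset.Ioo 0 (n+2)).attach, S k.1 * S (n+2-k.1)) / (n+3)
decreasing_by
  · have := Finset.mem_Ioo.mp k.2; omega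
  · have := Finset.mem_Ioo.mp k.2; omega

lemma S_zero : S 0 = 0 := by rw [S]
lemma S_one : S 1 = 1/2 := by rw [S]
lemma S_rec (n : ℕ) (hn : 2 ≤ n) :
    S n = (∑ k ∈ Finset.Ioo 0 n, S k * S (n-k)) / (n+1) := by
  obtain ⟨m, rfl⟩ : ∃ m, n = m + 2 := ⟨n - 2, by omega⟩
  rw [S, Finset.sum_attach (Finset.Ioo 0 (m+2)) (fun k => S k * S (m+2-k))]
  push_cast; ring_nf

lemma S_pos : ∀ n, 1 ≤ n → 0 < S n := by
  intro n
  induction n using Nat.strong_induction_on with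
  | _ n ih =>
    intro hn
    rcases eq_or_lt_of_le hn with h | h
    · rw [← h]; norm_num [S_one]
    · rw [S_rec n h]
      apply div_pos
      · apply Finset.sum_pos
        · intro k hk
          have hk' := Finset.mem_Ioo.mp hk
          exact mul_pos (ih k hk'.2 hk'.1) (ih (n-k) (by omega) (by omega))
        · exact ⟨1, Finset.mem_Ioo.mpr ⟨by omega, by omega⟩⟩
      · positivity

def p (n : ℕ) : ℚ := (-1)^n * catalan n / (2*n).factorial

lemma prec (n : ℕ) : ((n:ℚ)+1)*((n:ℚ)+2) * p (n+1) = - p n := by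
  have key : (n+1)*((n+2)*catalan (n+1)) = (2*n+1)*(2*n+2) * catalan n := by
    rw [succ_mul_catalan_eq_centralBinom, Nat.succ_mul_centralBinom_succ,
      ← succ_mul_catalan_eq_centralBinom]
    ring
  have keyQ : ((n:ℚ)+1)*(((n:ℚ)+2)*(catalan (n+1):ℚ)) = (2*(n:ℚ)+1)*(2*(n:ℚ)+2)*(catalan n:ℚ) := by
    exact_mod_cast congrArg (fun x : ℕ => (x : ℚ)) key
  have hfac : ((2*(n+1)).factorial : ℚ) = (2*(n:ℚ)+2)*((2*(n:ℚ)+1)*((2*n).factorial:ℚ)) := by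
    have h2 : 2*(n+1) = (2*n+1)+1 := by ring
    rw [h2, Nat.factorial_succ, Nat.factorial_succ]
    push_cast; ring
  have hne : ((2*n).factorial : ℚ) ≠ 0 := by exact_mod_cast (2*n).factorial_ne_zero
  rw [p, p, hfac]
  field_simp
  have keyQ' : ((n:ℚ)+2)*(catalan (n+1):ℚ) = 2*(2*(n:ℚ)+1)*(catalan n:ℚ) :=
    mul_left_cancel₀ (by positivity : ((n:ℚ)+1) ≠ 0) (by linear_combination keyQ)
  linear_combination (-((-1:ℚ))^n) * keyQ'

lemma conv_range (n : ℕ) :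
    ∑ i ∈ range (n+1), S i * S (n - i) = ∑ i ∈ Finset.Ioo 0 n, S i * S (n-i) := by
  symm
  apply Finset.sum_subset
  · intro x hx
    have := Finset.mem_Ioo.mp hx
    exact Finset.mem_range.mpr (by omega)
  · intro x hx hx'
    have h1 := Finset.mem_range.mp hx
    have : x = 0 ∨ x = n := by
      rcases Nat.eq_zero_or_pos x with h | h
      · left; exact h
      · right; by_contra hne
        exact hx' (Finset.mem_Ioo.mpr ⟨h, by omega⟩)
    rcases this with rfl | rfl
    · rw [S_zero, zero_mul]
    · rw [Nat.sub_self, S_zero, mul_zero]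

def U : ℚ⟦X⟧ := PowerSeries.mk S
def Ps : ℚ⟦X⟧ := PowerSeries.mk p

lemma R1 : (X : ℚ⟦X⟧) * (d⁄dX ℚ U) + U = U^2 + X := by
  ext n
  rcases n with _ | n
  · simp [U, constantCoeff_X, S_zero, sq, coeff_zero_eq_constantCoeff, map_mul]
  · rw [map_add, map_add, coeff_succ_X_mul, PowerSeries.coeff_derivative, sq, coeff_mul,
      Finset.Nat.sum_antidiagonal_eq_sum_range_succ_mk]
    simp only [U, coeff_mk, coeff_X]
    rw [conv_range (n+1)]
    rcases Nat.eq_zero_or_pos n with rfl | hn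
    · norm_num [S_one]
      rw [show Finset.Ioo 0 1 = ∅ by rfl]
      norm_num
    · rw [if_neg (by omega)]
      have hrec := S_rec (n+1) (by omega)
      have hne : ((n:ℚ)+2) ≠ 0 := by positivity
      rw [hrec]
      push_cast
      field_simp
      ring

lemma R2 : (X : ℚ⟦X⟧) * (d⁄dX ℚ (d⁄dX ℚ Ps)) + (d⁄dX ℚ Ps + d⁄dX ℚ Ps + Ps) = 0 := by
  ext n
  rcases n with _ | n
  · have h0 := prec 0
    rw [map_add, map_add, map_add, coeff_zero_eq_constantCoeff, map_mul, constantCoeff_X,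
      zero_mul, zero_add, ← coeff_zero_eq_constantCoeff]
    simp only [Ps, PowerSeries.coeff_derivative, coeff_mk, map_zero]
    push_cast at h0 ⊢
    linarith
  · have hp := prec (n+1)
    rw [map_add, map_add, map_add, coeff_succ_X_mul]
    simp only [PowerSeries.coeff_derivative, Ps, coeff_mk, map_zero]
    push_cast at hp ⊢
    linarith

def W : ℚ⟦X⟧ := U * Ps + X * d⁄dX ℚ Ps

lemma XDW : (X : ℚ⟦X⟧) * d⁄dX ℚ W = (U - 1) * W := by
  have hW : d⁄dX ℚ W = (d⁄dX ℚ U) * Ps + U * (d⁄dX ℚ Ps)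
      + ((d⁄dX ℚ Ps) + X * (d⁄dX ℚ (d⁄dX ℚ Ps))) := by
    simp only [W, map_add, Derivation.leibniz, smul_eq_mul, derivative_X, mul_one]
    ring
  rw [hW]
  simp only [W]
  linear_combination Ps * R1 + X * R2

lemma Wcoeff (n : ℕ) : coeff n W = (∑ j ∈ range (n+1), S j * p (n - j)) + n * p n := by
  rcases n with _ | n
  · have h0 : coeff 0 W = 0 := by
      simp [W, coeff_zero_eq_constantCoeff, map_mul, constantCoeff_X, U, Ps,
        constantCoeff_mk, S_zero]
    rw [h0]
    simp [S_zero]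
  · rw [W, map_add, coeff_mul, Finset.Nat.sum_antidiagonal_eq_sum_range_succ_mk,
      coeff_succ_X_mul, PowerSeries.coeff_derivative]
    simp only [U, Ps, coeff_mk]
    push_cast
    ring

lemma Wzero : W = 0 := by
  have key : ∀ n, coeff n W = 0 := by
    intro n
    induction n using Nat.strong_induction_on with
    | _ n ih =>
      rcases n with _ | m
      · rw [Wcoeff 0]
        simp [S_zero]
      · have h := congrArg (coeff (m+1)) XDW
        rw [coeff_succ_X_mul, PowerSeries.coeff_derivative, coeff_mul] at h
        rw [Finset.sum_eq_single (0, m+1)] at h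
        · have hU0 : coeff 0 (U - 1) = -1 := by
            simp [U, S_zero]
          rw [hU0] at h
          have : ((m:ℚ)+1+1) * coeff (m+1) W = 0 := by linarith [h]
          have hne : ((m:ℚ)+1+1) ≠ 0 := by positivity
          exact (mul_eq_zero.mp this).resolve_left hne
        · intro b hb hbne
          have hsum := Finset.HasAntidiagonal.mem_antidiagonal.mp hb
          have : b.2 < m + 1 := by
            rcases Nat.lt_or_ge b.2 (m+1) with h' | h'
            · exact h'
            · exfalso; apply hbne
              have : b.2 = m+1 := by omega
              have : b.1 = 0 := by omega
              ext <;> simp_all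
          rw [ih b.2 this, mul_zero]
        · intro hmem
          exact absurd (Finset.HasAntidiagonal.mem_antidiagonal.mpr (by simp)) hmem
  ext n
  rw [key n, map_zero]

lemma wkey (n : ℕ) : (∑ j ∈ range (n+1), S j * p (n - j)) + n * p n = 0 := by
  rw [← Wcoeff n, Wzero, map_zero]

def Fs : ℚ⟦X⟧ := PowerSeries.mk fun m : ℕ =>
  if 2 ∣ m then ((-1) ^ (m / 2) * catalan (m / 2) / m.factorial : ℚ) else 0

lemma Fs_even (n : ℕ) : coeff (2*n) Fs = p n := by
  rw [Fs, coeff_mk, if_pos ⟨n, rfl⟩, Nat.mul_div_cancel_left n (by norm_num), p]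

lemma Fs_odd (m : ℕ) (h : ¬ 2 ∣ m) : coeff m Fs = 0 := by
  rw [Fs, coeff_mk, if_neg h]

lemma constFs : constantCoeff Fs = 1 := by
  have := Fs_even 0
  rw [← coeff_zero_eq_constantCoeff]
  simp only [mul_zero] at this
  rw [this, p]
  norm_num

lemma Fs_ne : Fs ≠ 0 := by
  intro h
  have h1 := constFs
  rw [h, map_zero] at h1
  exact zero_ne_one h1

lemma XdvdFs : (X : ℚ⟦X⟧) ∣ (Fs - 1) := by
  rw [PowerSeries.X_dvd_iff, map_sub, constFs, map_one, sub_self]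

def Tt (N : ℕ) : ℚ⟦X⟧ := ∑ k ∈ range (N+1), ((-1)^(k+1)/(k:ℚ)) • (Fs-1)^k

lemma LemA (n N : ℕ) (h : n ≤ N) : coeff n (pslog Fs) = coeff n (Tt N) := by
  rw [pslog, coeff_mk, Tt, map_sum]
  simp only [map_smul]
  apply Finset.sum_subset
  · exact Finset.range_subset_range.mpr (by omega)
  · intro k hk hk'
    have hkn : n < k := by
      simp only [Finset.mem_range] at hk hk'
      omega
    have : coeff n ((Fs-1)^k) = 0 :=
      PowerSeries.X_pow_dvd_iff.mp (pow_dvd_pow_of_dvd XdvdFs k) n hkn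
    rw [this, smul_zero]

lemma LemB (N : ℕ) : Fs * d⁄dX ℚ (Tt N) = d⁄dX ℚ Fs * (1 - (1-Fs)^N) := by
  have hD1 : d⁄dX ℚ (Fs - 1) = d⁄dX ℚ Fs := by
    rw [map_sub, Derivation.map_one_eq_zero, sub_zero]
  have hDT : d⁄dX ℚ (Tt N) = (∑ i ∈ range N, (1-Fs)^i) * d⁄dX ℚ Fs := by
    rw [Tt, map_sum, Finset.sum_range_succ']
    have h0 : d⁄dX ℚ (((-1:ℚ)^(0+1)/((0:ℕ):ℚ)) • (Fs - 1) ^ 0) = 0 := by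
      simp
    rw [h0, add_zero, Finset.sum_mul]
    apply Finset.sum_congr rfl
    intro i _
    rw [Derivation.map_smul, Derivation.leibniz_pow, hD1, Nat.add_sub_cancel]
    have hcast : ((i+1) • ((Fs-1)^i • d⁄dX ℚ Fs)) = (((i+1:ℕ):ℚ)) • ((Fs-1)^i * d⁄dX ℚ Fs) := by
      rw [smul_eq_mul, Nat.cast_smul_eq_nsmul]
    rw [hcast, smul_smul, div_mul_cancel₀ _ (by positivity : ((i+1:ℕ):ℚ) ≠ 0)]
    rw [show ((-1:ℚ))^(i+1+1) = (-1:ℚ)^i by ring]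
    rw [PowerSeries.smul_eq_C_mul, map_pow, map_neg, map_one]
    have hmp : ((-1 : ℚ⟦X⟧))^i * (Fs - 1)^i = (1 - Fs)^i := by
      rw [← mul_pow, show ((-1 : ℚ⟦X⟧))*(Fs-1) = 1-Fs by ring]
    rw [← mul_assoc, hmp]
  rw [hDT]
  have geo := geom_sum_mul (1-Fs) N
  linear_combination (-(d⁄dX ℚ Fs)) * geo

lemma LemC : Fs * d⁄dX ℚ (pslog Fs) = d⁄dX ℚ Fs := by
  ext m
  have step1 : coeff m (Fs * d⁄dX ℚ (pslog Fs)) = coeff m (Fs * d⁄dX ℚ (Tt (m+1))) := by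
    rw [coeff_mul, coeff_mul]
    apply Finset.sum_congr rfl
    intro b hb
    have hb2 : b.2 ≤ m := by
      have := Finset.HasAntidiagonal.mem_antidiagonal.mp hb
      omega
    rw [PowerSeries.coeff_derivative, PowerSeries.coeff_derivative,
      LemA (b.2+1) (m+1) (by omega)]
  rw [step1, LemB]
  rw [mul_sub, mul_one, map_sub]
  have hz : coeff m (d⁄dX ℚ Fs * (1-Fs)^(m+1)) = 0 := by
    apply PowerSeries.X_pow_dvd_iff.mp _ m (lt_add_one m)
    apply Dvd.dvd.mul_left
    apply pow_dvd_pow_of_dvd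
    rw [PowerSeries.X_dvd_iff, map_sub, map_one, constFs, sub_self]
  rw [hz, sub_zero]

def Gs : ℚ⟦X⟧ := PowerSeries.mk fun m : ℕ =>
  if 2 ∣ m ∧ m ≠ 0 then (S (m/2) / ((m/2 : ℕ) : ℚ)) else 0

lemma evenSum (n : ℕ) (g : ℕ → ℚ) (h : ∀ i, i < 2*n → ¬ 2 ∣ i → g i = 0) :
    ∑ i ∈ range (2*n), g i = ∑ t ∈ range n, g (2*t) := by
  induction n with
  | zero => simp
  | succ n ih =>
    rw [show 2*(n+1) = (2*n+1)+1 by ring, Finset.sum_range_succ, Finset.sum_range_succ,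
      Finset.sum_range_succ]
    rw [ih (fun i hi hd => h i (by omega) hd), h (2*n+1) (by omega) (by omega), add_zero]

lemma DGs_coeff (j : ℕ) : coeff j (d⁄dX ℚ Gs) =
    if 2 ∣ (j+1) then 2 * S ((j+1)/2) else 0 := by
  rw [PowerSeries.coeff_derivative, Gs, coeff_mk]
  by_cases h : 2 ∣ (j+1)
  · rw [if_pos ⟨h, by omega⟩, if_pos h]
    obtain ⟨k, hk⟩ := h
    have hk1 : 1 ≤ k := by omega
    rw [hk, Nat.mul_div_cancel_left k (by norm_num)]
    have : ((j:ℚ)+1) = 2*(k:ℚ) := by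
      have : ((j+1 : ℕ) : ℚ) = ((2*k : ℕ) : ℚ) := by rw [hk]
      push_cast at this
      linarith
    rw [this]
    have hkq : ((k:ℕ):ℚ) ≠ 0 := by
      simp only [ne_eq, Nat.cast_eq_zero]
      omega
    field_simp
  · rw [if_neg (by tauto), if_neg h, zero_mul]

lemma LemD : Fs * d⁄dX ℚ Gs = -(d⁄dX ℚ Fs) := by
  ext m
  rw [coeff_mul, Finset.Nat.sum_antidiagonal_eq_sum_range_succ_mk, map_neg,
    PowerSeries.coeff_derivative]
  by_cases hm : 2 ∣ m
  · -- even case : everything vanishes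
    have hodd : ¬ 2 ∣ (m+1) := by omega
    rw [Fs_odd (m+1) hodd, zero_mul, neg_zero]
    apply Finset.sum_eq_zero
    intro i hi
    have him : i ≤ m := by
      have := Finset.mem_range.mp hi
      omega
    by_cases hieven : 2 ∣ i
    · have : ¬ 2 ∣ (m - i + 1) := by omega
      rw [DGs_coeff, if_neg this, mul_zero]
    · rw [Fs_odd i hieven, zero_mul]
  · -- odd case
    obtain ⟨n, hn⟩ : ∃ n, m = 2*n+1 := ⟨m/2, by omega⟩
    subst hn
    have hw := wkey (n+1)
    rw [show 2*n+1+1 = 2*(n+1) by ring, Fs_even (n+1)]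
    rw [show (2*n+1).succ = 2*(n+1) by omega]
    rw [evenSum (n+1) _ (fun i _ hd => by rw [Fs_odd i hd, zero_mul])]
    have hterm : ∀ t ∈ range (n+1),
        coeff (2*t) Fs * coeff (2*n+1-2*t) (d⁄dX ℚ Gs) = 2 * (p t * S (n+1-t)) := by
      intro t ht
      have htn : t ≤ n := by
        have := Finset.mem_range.mp ht
        omega
      rw [Fs_even t, DGs_coeff]
      have h1 : 2*n+1-2*t+1 = 2*(n+1-t) := by omega
      rw [h1, if_pos ⟨n+1-t, rfl⟩, Nat.mul_div_cancel_left _ (by norm_num)]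
      ring
    rw [Finset.sum_congr rfl hterm]
    -- reflect the sum
    have hrefl : ∑ t ∈ range (n+1), 2 * (p t * S (n+1-t))
        = ∑ t ∈ range (n+1), 2 * (p (n-t) * S (n+1-(n-t))) := by
      exact (Finset.sum_range_reflect (fun t => 2 * (p t * S (n+1-t))) (n+1)).symm
    have hc : ∀ t ∈ range (n+1), 2 * (p (n-t) * S (n+1-(n-t))) = 2 * (S (t+1) * p (n-t)) := by
      intro t ht
      have htn : t ≤ n := by
        have := Finset.mem_range.mp ht
        omega
      rw [show n+1-(n-t) = t+1 by omega]
      ring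
    rw [hrefl, Finset.sum_congr rfl hc, ← Finset.mul_sum]
    have hw' : ∑ t ∈ range (n+1), S (t+1) * p (n-t) = -(((n:ℚ)+1) * p (n+1)) := by
      rw [Finset.sum_range_succ'] at hw
      simp only [S_zero, zero_mul, Nat.succ_sub_succ_eq_sub, Nat.sub_zero, add_zero, zero_add] at hw
      push_cast at hw
      linarith
    rw [hw']
    push_cast
    ring

lemma LemE : pslog Fs = -Gs := by
  apply PowerSeries.derivative.ext
  · apply mul_left_cancel₀ Fs_ne
    rw [LemC, map_neg, mul_neg, LemD, neg_neg]
  · have h1 : constantCoeff (pslog Fs) = 0 := by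
      rw [pslog, ← coeff_zero_eq_constantCoeff, coeff_mk]
      norm_num
    have h2 : constantCoeff Gs = 0 := by
      rw [Gs, ← coeff_zero_eq_constantCoeff, coeff_mk]
      norm_num
    rw [h1, map_neg, h2, neg_zero]

lemma hfacQ (n : ℕ) : ((2*(n+1)).factorial : ℚ)
    = (2*(n:ℚ)+2)*((2*(n:ℚ)+1)*(((2*n).factorial:ℕ):ℚ)) := by
  have h2 : 2*(n+1) = (2*n+1)+1 := by ring
  rw [h2, Nat.factorial_succ, Nat.factorial_succ]
  push_cast
  ring



/-- Lassalle's sequence, defined by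
`-log (∑ (-1)^n C_n z^(2n)/(2n)!) = ∑_{n ≥ 1} a_n z^(2n)/(2n)!`, is weakly increasing. -/
theorem statement14 (a : ℕ → ℚ)
    (ha : -pslog (PowerSeries.mk fun m : ℕ =>
        if 2 ∣ m then ((-1) ^ (m / 2) * catalan (m / 2) / m.factorial : ℚ) else 0) =
      PowerSeries.mk fun m : ℕ =>
        if 2 ∣ m ∧ m ≠ 0 then (a (m / 2) / m.factorial : ℚ) else 0) :
    ∀ n : ℕ, 1 ≤ n → a n ≤ a (n + 1) := by
  have ha' : (PowerSeries.mk fun m : ℕ =>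
      if 2 ∣ m ∧ m ≠ 0 then (a (m / 2) / m.factorial : ℚ) else 0) = Gs := by
    rw [← ha]
    show -pslog Fs = Gs
    rw [LemE, neg_neg]
  have haS : ∀ n : ℕ, 1 ≤ n → a n = ((2*n).factorial : ℚ) * S n / n := by
    intro n hn
    have h := congrArg (coeff (2*n)) ha'
    rw [coeff_mk, Gs, coeff_mk, if_pos ⟨dvd_mul_right 2 n, by omega⟩,
      if_pos ⟨dvd_mul_right 2 n, by omega⟩,
      Nat.mul_div_cancel_left n (by norm_num)] at h
    have hfne : ((2*n).factorial : ℚ) ≠ 0 := by exact_mod_cast (2*n).factorial_ne_zero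
    have hnne : ((n:ℕ):ℚ) ≠ 0 := by
      simp only [ne_eq, Nat.cast_eq_zero]; omega
    field_simp at h ⊢
    linarith
  intro n hn
  rcases eq_or_lt_of_le hn with h1 | h2
  · -- n = 1
    have hn1 : n = 1 := h1.symm
    subst hn1
    have hS2 : S 2 = 1/12 := by
      rw [S_rec 2 le_rfl, show Finset.Ioo 0 2 = {1} from rfl]
      norm_num [S_one]
    rw [haS 1 le_rfl, haS 2 (by norm_num), hS2, S_one]
    norm_num [Nat.factorial]
  · -- n ≥ 2
    have hn2 : 2 ≤ n := h2
    have hSn := S_pos n (by omega)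
    have hSn1 := S_pos (n+1) (by omega)
    have hfpos : (0:ℚ) < (((2*n).factorial:ℕ):ℚ) := by exact_mod_cast (2*n).factorial_pos
    have h2n : (2:ℚ) ≤ (n:ℚ) := by exact_mod_cast hn2
    have hstep : S n / ((n:ℚ)+2) ≤ S (n+1) := by
      have hrec := S_rec (n+1) (by omega)
      have hsub : ({1, n} : Finset ℕ) ⊆ Finset.Ioo 0 (n+1) := by
        intro x hx
        simp only [Finset.mem_insert, Finset.mem_singleton] at hx
        rcases hx with rfl | rfl <;> exact Finset.mem_Ioo.mpr ⟨by omega, by omega⟩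
      have hsum : S n ≤ ∑ k ∈ Finset.Ioo 0 (n+1), S k * S (n+1-k) := by
        have h12 : ∑ k ∈ ({1, n} : Finset ℕ), S k * S (n+1-k) = S n := by
          rw [Finset.sum_insert (by simp; omega), Finset.sum_singleton]
          rw [show n+1-1 = n by omega, show n+1-n = 1 by omega, S_one]
          ring
        rw [← h12]
        apply Finset.sum_le_sum_of_subset_of_nonneg hsub
        intro k hk _
        have hk' := Finset.mem_Ioo.mp hk
        exact le_of_lt (mul_pos (S_pos k (by omega)) (S_pos (n+1-k) (by omega)))
      rw [hrec]
      push_cast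
      rw [div_le_div_iff₀ (by positivity) (by positivity)]
      nlinarith [hsum]
    have h3 : S n ≤ ((n:ℚ)+2) * S (n+1) := by
      rw [div_le_iff₀ (by positivity)] at hstep
      linarith
    calc a n = (((2*n).factorial:ℕ):ℚ) * S n / n := haS n (by omega)
      _ ≤ (((2*(n+1)).factorial:ℕ):ℚ) * S (n+1) / (((n+1:ℕ)):ℚ) := by
          rw [hfacQ, div_le_div_iff₀ (by positivity) (by positivity)]
          push_cast
          have hpoly : ((n:ℚ)+1)*((n:ℚ)+2) ≤ (n:ℚ)*(2*(n:ℚ)+1)*(2*(n:ℚ)+2) := by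
            nlinarith [h2n, mul_nonneg (sub_nonneg.mpr h2n) (sq_nonneg (n:ℚ)),
              mul_le_mul_of_nonneg_right h2n (by positivity : (0:ℚ) ≤ (n:ℚ))]
          have hA := mul_le_mul_of_nonneg_left h3
            (by positivity : (0:ℚ) ≤ ((n:ℚ)+1) * (((2*n).factorial:ℕ):ℚ))
          have hB := mul_le_mul_of_nonneg_right hpoly
            (le_of_lt (mul_pos hfpos hSn1))
          nlinarith [hA, hB]
      _ = a (n+1) := (haS (n+1) (by omega)).symm


end
end
end
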